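/- arXiv:2209.12960 — 14 statements merged into one kernel-verified Lean document; each statement's English description precedes it below -/
import Mathlib

section
/- Let R be a commutative ring and X a subset of the set Idl(R) of ideals of R, endowed with the coarse lower topology. Then X is quasi-compact if and only if (a) every element of X is contained in some maximal element of X, and (b) the set Max(X) of maximal elements of X is quasi-compact. -/
/-- The coarse lower topology on the set of ideals of a commutative ring:
subbasic closed sets are the sets `{i | a ≤ i}` for ideals `a`. -/
def coarseLowerTopology (R : Type*) [CommRing R] : TopologicalSpace (Ideal R) :=
  TopologicalSpace.generateFrom {U : Set (Ideal R) | ∃ a : Ideal R, U = {i : Ideal R | a ≤ i}ᶜ}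

lemma coarseLowerTopology_isClosed_Ici {R : Type*} [CommRing R] (a : Ideal R) :
    @IsClosed _ (coarseLowerTopology R) (Set.Ici a) := by
  letI := coarseLowerTopology R
  rw [← isOpen_compl_iff]
  exact TopologicalSpace.GenerateOpen.basic _ ⟨a, rfl⟩

lemma coarseLowerTopology_isLowerSet {R : Type*} [CommRing R] {U : Set (Ideal R)}
    (h : @IsOpen _ (coarseLowerTopology R) U) : IsLowerSet U := by
  induction h with
  | basic u hu =>
    obtain ⟨a, rfl⟩ := hu
    intro x y hyx hx hay
    exact hx (le_trans hay hyx)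
  | univ => exact isLowerSet_univ
  | inter u v _ _ hu hv => exact hu.inter hv
  | sUnion S _ hS => exact isLowerSet_sUnion hS

/-- finite subsets of a chain have upper bounds in the chain -/
lemma chain_finset_bound {R : Type*} [CommRing R] {c : Set (Ideal R)}
    (hc : IsChain (· ≤ ·) c) {y : Ideal R} (hy : y ∈ c) (u : Finset ↥c) :
    ∃ m ∈ c, ∀ i ∈ u, (i : Ideal R) ≤ m := by
  classical
  induction u using Finset.induction with
  | empty => exact ⟨y, hy, by simp⟩
  | @insert a s ha ih =>
    obtain ⟨m, hm, hms⟩ := ih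
    rcases eq_or_ne (a : Ideal R) m with heq | hne
    · refine ⟨m, hm, fun i hi => ?_⟩
      rcases Finset.mem_insert.mp hi with rfl | hi
      · exact le_of_eq heq
      · exact hms i hi
    rcases hc a.2 hm hne with h | h
    · refine ⟨m, hm, fun i hi => ?_⟩
      rcases Finset.mem_insert.mp hi with rfl | hi
      · exact h
      · exact hms i hi
    · refine ⟨(a : Ideal R), a.2, fun i hi => ?_⟩
      rcases Finset.mem_insert.mp hi with rfl | hi
      · exact le_refl _
      · exact (hms i hi).trans h

/-- A subset `X` of `Idl(R)` is quasi-compact iff every element of `X` is below a maximal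
element of `X` and the set of maximal elements of `X` is quasi-compact. -/
theorem isCompact_iff_max {R : Type*} [CommRing R] (X : Set (Ideal R)) :
    letI := coarseLowerTopology R
    IsCompact X ↔
      ((∀ a ∈ X, ∃ b ∈ {m ∈ X | ∀ c ∈ X, m ≤ c → c = m}, a ≤ b) ∧
        IsCompact {m ∈ X | ∀ c ∈ X, m ≤ c → c = m}) := by
  letI := coarseLowerTopology R
  set M := {m ∈ X | ∀ c ∈ X, m ≤ c → c = m} with hMdef
  have hMX : M ⊆ X := fun m hm => hm.1
  constructor
  · intro hX
    have hmax : ∀ a ∈ X, ∃ b ∈ M, a ≤ b := by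
      intro a ha
      have hZ := zorn_le_nonempty₀ X ?_ a ha
      · obtain ⟨m, ham, hm⟩ := hZ
        exact ⟨m, ⟨hm.1, fun c hc hmc => le_antisymm (hm.2 hc hmc) hmc⟩, ham⟩
      · intro c hcX hchain y hyc
        -- use compactness: family of closed sets Ici i for i in c
        have hne : (X ∩ ⋂ i : c, Set.Ici (i : Ideal R)).Nonempty := by
          apply hX.inter_iInter_nonempty
          · intro i; exact coarseLowerTopology_isClosed_Ici _
          · intro u
            classical
            obtain ⟨m, hmc, hmub⟩ := chain_finset_bound hchain hyc u
            refine ⟨m, hcX hmc, ?_⟩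
            simp only [Set.mem_iInter]
            intro i hi
            exact hmub i hi
        obtain ⟨ub, hubX, hubI⟩ := hne
        refine ⟨ub, hubX, fun z hz => ?_⟩
        have := Set.mem_iInter.mp hubI ⟨z, hz⟩
        exact this
    refine ⟨hmax, ?_⟩
    -- M compact: any open cover of M covers X (opens are lower sets)
    apply isCompact_of_finite_subcover
    intro ι U hUo hMU
    have hXU : X ⊆ ⋃ i, U i := by
      intro x hx
      obtain ⟨m, hmM, hxm⟩ := hmax x hx
      obtain ⟨i, hi⟩ := Set.mem_iUnion.mp (hMU hmM)
      exact Set.mem_iUnion.mpr ⟨i, coarseLowerTopology_isLowerSet (hUo i) hxm hi⟩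
    obtain ⟨t, ht⟩ := hX.elim_finite_subcover U hUo hXU
    exact ⟨t, fun m hm => ht (hMX hm)⟩
  · rintro ⟨hmax, hM⟩
    apply isCompact_of_finite_subcover
    intro ι U hUo hXU
    obtain ⟨t, ht⟩ := hM.elim_finite_subcover U hUo (fun m hm => hXU (hMX hm))
    refine ⟨t, fun x hx => ?_⟩
    obtain ⟨m, hmM, hxm⟩ := hmax x hx
    obtain ⟨i, hit, hi⟩ := Set.mem_iUnion₂.mp (ht hmM)
    exact Set.mem_iUnion₂.mpr ⟨i, hit, coarseLowerTopology_isLowerSet (hUo i) hxm hi⟩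
end

section
/- Let R be a commutative ring and X a subset of Idl(R), with the coarse lower topology, such that every maximal ideal of R belongs to X. Then X is quasi-compact. -/
open Set

namespace Topology.IsLower

variable {α : Type*} [CompleteLattice α]

theorem sUnion_image_compl_Ici (A : Set α) :
    ⋃₀ ((fun a ↦ (Ici a)ᶜ) '' A) = (Ici (sSup A))ᶜ := by
  ext x
  simp [sSup_le_iff]

theorem isCompact_of_forall_isCoatom_mem [TopologicalSpace α] [IsLower α] [IsCoatomic α]
    (htop : IsCompactElement (⊤ : α)) {X : Set α} (hX : ∀ m, IsCoatom m → m ∈ X) :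
    IsCompact X := by
  refine isCompact_generateFrom (topology_eq α) fun P hPS hXP ↦ ?_
  set A : Set α := {a | (Ici a)ᶜ ∈ P}
  have hP : P = (fun a ↦ (Ici a)ᶜ) '' A := by
    ext s
    refine ⟨fun hs ↦ ?_, ?_⟩
    · obtain ⟨a, rfl⟩ := hPS hs
      exact ⟨a, hs, rfl⟩
    · rintro ⟨a, ha, rfl⟩
      exact ha
  rw [hP, sUnion_image_compl_Ici] at hXP
  have hA : sSup A = ⊤ := by
    obtain h | ⟨m, hm, hAm⟩ := eq_top_or_exists_le_coatom (sSup A)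
    · exact h
    · exact absurd hAm (hXP (hX m hm))
  obtain ⟨t, htA, ht⟩ := (CompleteLattice.isCompactElement_iff_exists_le_sSup_of_le_sSup α ⊤).1
    htop A hA.ge
  refine ⟨(fun a ↦ (Ici a)ᶜ) '' t, hP ▸ image_mono htA, t.finite_toSet.image _, ?_⟩
  rwa [sUnion_image_compl_Ici, ← Finset.sup_id_eq_sSup, top_le_iff.1 ht, ← hA]

end Topology.IsLower

theorem coarseLowerTopology_eq_lower (R : Type*) [CommRing R] :
    coarseLowerTopology R = Topology.lower (Ideal R) := by
  simp only [coarseLowerTopology, Topology.lower, eq_comm (a := (_ : Set (Ideal R)))]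
  rfl

/-- If a set of ideals contains all maximal ideals, it is quasi-compact in the
coarse lower topology. -/
theorem isCompact_of_max_subset {R : Type*} [CommRing R] (X : Set (Ideal R))
    (hX : ∀ m : Ideal R, m.IsMaximal → m ∈ X) :
    letI := coarseLowerTopology R
    IsCompact X := by
  let := coarseLowerTopology R
  have : Topology.IsLower (Ideal R) := ⟨coarseLowerTopology_eq_lower R⟩
  exact Topology.IsLower.isCompact_of_forall_isCoatom_mem Ideal.isCompactElement_top
    fun m hm ↦ hX m ⟨hm⟩
end

section
/- If R is a Noetherian commutative ring, then every subset of Idl(R), with the subspace topology induced by the coarse lower topology, is quasi-compact. -/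
/-- If `R` is Noetherian, every subset of `Idl(R)` is quasi-compact in the coarse
lower topology. -/
theorem isCompact_of_noetherian {R : Type*} [CommRing R] (hR : IsNoetherianRing R)
    (X : Set (Ideal R)) :
    letI := coarseLowerTopology R
    IsCompact X := by
  letI := coarseLowerTopology R
  haveI : IsNoetherian R R := hR
  rw [isCompact_iff_ultrafilter_le_nhds]
  intro F hF
  set S : Set (Ideal R) := {a | {j : Ideal R | a ≤ j} ∈ F} with hS
  have hbot : (⊥ : Ideal R) ∈ S := by
    have : {j : Ideal R | ⊥ ≤ j} = Set.univ := by ext j; simp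
    simp only [hS, Set.mem_setOf_eq, this]; exact Filter.univ_mem
  have hsupcl : SupClosed S := by
    intro a ha b hb
    have h : {j : Ideal R | a ⊔ b ≤ j} = {j | a ≤ j} ∩ {j | b ≤ j} := by
      ext j; simp [sup_le_iff]
    simp only [hS, Set.mem_setOf_eq] at *
    rw [h]; exact Filter.inter_mem ha hb
  have hiS : sSup S ∈ S :=
    (CompleteLattice.WellFoundedGT.isSupFiniteCompact
      (Ideal R)).isSupClosedCompact (Ideal R) S ⟨⊥, hbot⟩ hsupcl
  have hXF : X ∈ F := Filter.le_principal_iff.mp hF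
  have hne : (X ∩ {j : Ideal R | sSup S ≤ j}).Nonempty :=
    Ultrafilter.nonempty_of_mem (Filter.inter_mem hXF hiS)
  obtain ⟨i, hiX, hile⟩ := hne
  refine ⟨i, hiX, ?_⟩
  rw [coarseLowerTopology, le_nhds_iff]
  intro s hs hso
  induction hso with
  | basic U hU =>
      obtain ⟨a, rfl⟩ := hU
      have haS : a ∉ S := fun h => hs (le_trans (le_sSup h) hile)
      exact Ultrafilter.compl_mem_iff_notMem.mpr haS
  | univ => exact Filter.univ_mem
  | inter U V hU hV ihU ihV => exact Filter.inter_mem (ihU hs.1) (ihV hs.2)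
  | sUnion K hK ih =>
      obtain ⟨U, hUK, hiU⟩ := hs
      exact Filter.mem_of_superset (ih U hUK hiU) (Set.subset_sUnion_of_mem hUK)
end

section
/- Let R be a Noetherian commutative ring. Then every irreducible closed subset of Idl(R), with the coarse lower topology, has a generic point; that is, Idl(R) is a sober space. -/
/-- If `R` is Noetherian, `Idl(R)` with the coarse lower topology is sober. -/
theorem quasiSober_of_noetherian {R : Type*} [CommRing R] (hR : IsNoetherianRing R) :
    letI := coarseLowerTopology R
    QuasiSober (Ideal R) := by
  letI := coarseLowerTopology R
  haveI : Topology.IsLower (Ideal R) := by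
    constructor
    show coarseLowerTopology R = Topology.lower (Ideal R)
    unfold coarseLowerTopology Topology.lower
    congr 1
    ext U
    exact ⟨fun ⟨a, h⟩ => ⟨a, h.symm⟩, fun ⟨a, h⟩ => ⟨a, h.symm⟩⟩
  constructor
  intro S hS hSc
  set A : Set (Ideal R) := {a | S ⊆ Set.Ici a} with hA
  refine ⟨sSup A, ?_⟩
  have hclos : closure {sSup A} = Set.Ici (sSup A) := Topology.IsLower.closure_singleton _
  have h1 : S ⊆ Set.Ici (sSup A) := fun y hy => sSup_le fun a (ha : S ⊆ Set.Ici a) => ha hy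
  have h2 : Set.Ici (sSup A) ⊆ S := by
    intro y hy
    by_contra hyS
    classical
    have hyS' : y ∈ Sᶜ := hyS
    obtain ⟨v, ⟨t, htf, hv⟩, hyv, hvS⟩ :=
      Topology.IsLower.isTopologicalBasis.exists_subset_of_mem_open hyS' hSc.isOpen_compl
    subst hv
    have hSsub : S ⊆ ⋃₀ ↑(htf.toFinset.image (Set.Ici ·)) := by
      intro z hz
      have : z ∈ (upperClosure t : Set (Ideal R)) := by
        by_contra hzc
        exact (hvS hzc) hz
      obtain ⟨a, hat, haz⟩ := mem_upperClosure.mp this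
      exact ⟨Set.Ici a, Finset.mem_coe.mpr (Finset.mem_image.mpr ⟨a, htf.mem_toFinset.mpr hat, rfl⟩), haz⟩
    obtain ⟨z, hzmem, hSz⟩ := (isIrreducible_iff_sUnion_isClosed.mp hS)
      (htf.toFinset.image (Set.Ici ·))
      (by
        intro z hz
        simp only [Finset.mem_image, Set.Finite.mem_toFinset] at hz
        obtain ⟨a, _, rfl⟩ := hz
        exact isClosed_Ici) hSsub
    simp only [Finset.mem_image, Set.Finite.mem_toFinset] at hzmem
    obtain ⟨a, hat, rfl⟩ := hzmem
    have haA : a ∈ A := hSz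
    have : a ≤ y := le_trans (le_sSup haA) hy
    exact hyv (mem_upperClosure.mpr ⟨a, hat, this⟩)
  show closure {sSup A} = S
  rw [hclos]
  exact le_antisymm h2 h1
end

section
/- Let R be a commutative ring. The space Fgn(R) of proper finitely generated ideals of R, with the coarse lower topology, is quasi-compact if and only if every maximal ideal of R is finitely generated. -/
open Set Topology

theorem disjoint_upperBounds_iff_subset_iUnion {α : Type*} [Preorder α] {K A : Set α} :
    Disjoint K (upperBounds A) ↔ K ⊆ ⋃ a ∈ A, (Ici a)ᶜ := by
  simp only [disjoint_left, subset_def, mem_upperBounds, mem_iUnion, mem_compl_iff, mem_Ici,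
    exists_prop, not_forall]

namespace Topology.IsLower

variable {α : Type*} [TopologicalSpace α]

theorem isCompact_iff_disjoint_upperBounds [Preorder α] [IsLower α] {K : Set α} :
    IsCompact K ↔
      ∀ A : Set α, Disjoint K (upperBounds A) → ∃ B ⊆ A, B.Finite ∧ Disjoint K (upperBounds B) := by
  simp only [disjoint_upperBounds_iff_subset_iUnion]
  refine ⟨fun hK A hA => hK.elim_finite_subcover_image (fun _ _ => isClosed_Ici.isOpen_compl) hA,
    fun h => isCompact_generateFrom (topology_eq α) fun P hP hKP => ?_⟩
  have hP_eq : ⋃₀ P = ⋃ a ∈ {a | (Ici a)ᶜ ∈ P}, (Ici a)ᶜ := by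
    ext x
    simp only [mem_sUnion, mem_iUnion, mem_ofPred_eq, exists_prop]
    constructor
    · rintro ⟨U, hUP, hxU⟩
      obtain ⟨a, rfl⟩ := hP hUP
      exact ⟨a, hUP, hxU⟩
    · rintro ⟨a, haP, hxa⟩
      exact ⟨_, haP, hxa⟩
  obtain ⟨B, hBA, hB, hKB⟩ := h _ (hP_eq ▸ hKP)
  refine ⟨(fun a => (Ici a)ᶜ) '' B, image_subset_iff.2 hBA, hB.image _, ?_⟩
  rwa [sUnion_image]

theorem isCompact_of_setOf_isCoatom_subset [CompleteLattice α] [IsLower α] {K : Set α}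
    (htop : IsCompactElement (⊤ : α)) (hK : ⊤ ∉ K) (hcoatom : {m | IsCoatom m} ⊆ K) :
    IsCompact K := by
  refine isCompact_iff_disjoint_upperBounds.2 fun A hA => ?_
  have hA_top : sSup A = ⊤ := by
    have := CompleteLattice.coatomic_of_top_compact htop
    refine (eq_top_or_exists_le_coatom (sSup A)).resolve_right ?_
    rintro ⟨m, hm, hAm⟩
    exact disjoint_left.1 hA (hcoatom hm) fun a ha => (le_sSup ha).trans hAm
  obtain ⟨t, htA, htop_le⟩ :=
    (CompleteLattice.isCompactElement_iff_exists_le_sSup_of_le_sSup α ⊤).1 htop A hA_top.ge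
  refine ⟨t, htA, t.finite_toSet, disjoint_left.2 fun k hkK hk => hK ?_⟩
  have hk_top : k = ⊤ := eq_top_iff.2 (htop_le.trans (Finset.sup_le fun a ha => hk ha))
  rwa [hk_top] at hkK

theorem isCompactElement_of_isCoatom [CompleteLattice α] [IsCompactlyGenerated α] [IsLower α]
    (hK : IsCompact {k : α | k ≠ ⊤ ∧ IsCompactElement k}) {m : α} (hm : IsCoatom m) :
    IsCompactElement m := by
  by_contra hm_compact
  have hA : Disjoint {k : α | k ≠ ⊤ ∧ IsCompactElement k}
      (upperBounds {c | IsCompactElement c ∧ c ≤ m}) := by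
    refine disjoint_left.2 fun k ⟨hk_top, hk_compact⟩ hk => hm_compact ?_
    rwa [← (hm.le_iff_eq hk_top).1 (sSup_compact_le_eq m ▸ sSup_le hk)]
  obtain ⟨B, hBA, hB, hKB⟩ := isCompact_iff_disjoint_upperBounds.1 hK _ hA
  have hB_le : sSup B ≤ m := sSup_le fun c hc => (hBA hc).2
  have hB_compact : IsCompactElement (sSup B) := by
    rw [← hB.coe_toFinset, ← Finset.sup_id_eq_sSup]
    exact CompleteLattice.isCompactElement_finsetSup _ fun c hc => (hBA (hB.mem_toFinset.1 hc)).1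
  exact disjoint_left.1 hKB ⟨ne_top_of_le_ne_top hm.1 hB_le, hB_compact⟩ fun _ => le_sSup

end Topology.IsLower

theorem isLower_coarseLowerTopology (R : Type*) [CommRing R] :
    @IsLower (Ideal R) (coarseLowerTopology R) _ := by
  refine @IsLower.mk _ (coarseLowerTopology R) _ (congrArg TopologicalSpace.generateFrom ?_)
  ext U
  exact exists_congr fun a => by rw [eq_comm, compl_ofPred]; rfl

theorem Ideal.fg_iff_isCompactElement {R : Type*} [Semiring R] (I : Ideal R) :
    I.FG ↔ IsCompactElement I :=
  Submodule.fg_iff_compact I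

/-- The space of proper finitely generated ideals is quasi-compact iff every
maximal ideal of `R` is finitely generated. -/
theorem fgn_isCompact_iff {R : Type*} [CommRing R] :
    letI := coarseLowerTopology R
    IsCompact {a : Ideal R | a ≠ ⊤ ∧ a.FG} ↔ ∀ m : Ideal R, m.IsMaximal → m.FG := by
  let := coarseLowerTopology R
  have := isLower_coarseLowerTopology R
  simp only [Ideal.fg_iff_isCompactElement, Ideal.isMaximal_def]
  constructor
  · exact fun hK m => IsLower.isCompactElement_of_isCoatom hK
  · intro hmax
    exact IsLower.isCompact_of_setOf_isCoatom_subset Ideal.isCompactElement_top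
      (fun htop => htop.1 rfl) fun m hm => ⟨hm.1, hmax m hm⟩
end

section
/- Let R be the product ring ∏_{i≥2} Z/2^i Z. Then the space Nip(R) of nilpotent ideals of R, with the coarse lower topology, is not quasi-compact. -/
abbrev RR := (i : {i : ℕ // 2 ≤ i}) → ZMod (2 ^ (i : ℕ))

def tt (n : ℕ) : RR := fun i => (2 : ZMod (2 ^ (i : ℕ))) ^ (max ((i : ℕ) - n) 1)

lemma two_pow_eq_zero {j e : ℕ} (h : j ≤ e) : (2 : ZMod (2 ^ j)) ^ e = 0 := by
  have : ((2 ^ e : ℕ) : ZMod (2 ^ j)) = 0 := by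
    rw [ZMod.natCast_eq_zero_iff]
    exact pow_dvd_pow 2 h
  simpa using this

lemma two_pow_ne_zero {j e : ℕ} (_hj : 1 ≤ j) (h : e < j) : (2 : ZMod (2 ^ j)) ^ e ≠ 0 := by
  intro hz
  have : ((2 ^ e : ℕ) : ZMod (2 ^ j)) = 0 := by simpa using hz
  rw [ZMod.natCast_eq_zero_iff] at this
  have := Nat.le_of_dvd (by positivity) this
  have := Nat.pow_le_pow_iff_right (a := 2) (by norm_num) |>.mp this
  omega

lemma tt_pow_eq_zero (n : ℕ) : (tt n) ^ (n + 1) = 0 := by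
  funext i
  have : ((tt n) ^ (n + 1)) i = (2 : ZMod (2 ^ (i : ℕ))) ^ ((max ((i : ℕ) - n) 1) * (n + 1)) := by
    simp [tt, ← pow_mul]
  rw [this]
  show _ = (0 : ZMod (2 ^ (i : ℕ)))
  apply two_pow_eq_zero
  rcases Nat.le_total ((i : ℕ) - n) 1 with h | h
  · rw [max_eq_right h]; omega
  · rw [max_eq_left h]
    have h1 : 1 * n ≤ ((i : ℕ) - n) * n := Nat.mul_le_mul_right n h
    have h2 : ((i : ℕ) - n) * (n + 1) = ((i : ℕ) - n) + ((i : ℕ) - n) * n := by ring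
    omega

lemma tt_notMem {a : Ideal RR} {k : ℕ} (hk : 0 < k) (ha : a ^ k = ⊥) : tt k ∉ a := by
  intro hmem
  have h1 : (tt k) ^ k ∈ a ^ k := Ideal.pow_mem_pow hmem k
  rw [ha, Ideal.mem_bot] at h1
  have h2 : ((tt k) ^ k) ⟨k + 1, by omega⟩ = 0 := by rw [h1]; rfl
  have h3 : ((tt k) ^ k) ⟨k + 1, by omega⟩ = (2 : ZMod (2 ^ (k + 1))) ^ (1 * k) := by
    simp [tt, ← pow_mul]
  rw [h3] at h2
  exact two_pow_ne_zero (by omega) (by omega) h2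

lemma tt_dvd {n N : ℕ} (h : n ≤ N) : tt N ∣ tt n := by
  refine ⟨fun i => (2 : ZMod (2 ^ (i : ℕ))) ^ (max ((i : ℕ) - n) 1 - max ((i : ℕ) - N) 1), ?_⟩
  funext i
  show (2 : ZMod (2 ^ (i : ℕ))) ^ _ = (2 : ZMod (2 ^ (i : ℕ))) ^ _ * _
  rw [← pow_add]
  congr 1
  have h1 : (i : ℕ) - N ≤ (i : ℕ) - n := Nat.sub_le_sub_left h _
  have h2 : max ((i : ℕ) - N) 1 ≤ max ((i : ℕ) - n) 1 := max_le_max h1 le_rfl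
  omega

/-- In `R = ∏_{i ≥ 2} ℤ/2^iℤ`, the space of nilpotent ideals is not quasi-compact. -/
theorem nip_not_isCompact :
    letI R := (i : {i : ℕ // 2 ≤ i}) → ZMod (2 ^ (i : ℕ))
    letI := coarseLowerTopology R
    ¬ IsCompact {a : Ideal R | ∃ k : ℕ, 0 < k ∧ a ^ k = ⊥} := by
  intro hcomp
  set U : ℕ → Set (Ideal RR) := fun n => {i : Ideal RR | Ideal.span {tt n} ≤ i}ᶜ with hU
  have hopen : ∀ n, @IsOpen _ (coarseLowerTopology RR) (U n) := fun n =>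
    TopologicalSpace.GenerateOpen.basic _ ⟨Ideal.span {tt n}, rfl⟩
  have hcover : {a : Ideal RR | ∃ k : ℕ, 0 < k ∧ a ^ k = ⊥} ⊆ ⋃ n, U n := by
    rintro a ⟨k, hk, hak⟩
    refine Set.mem_iUnion.mpr ⟨k, ?_⟩
    simp only [hU, Set.mem_compl_iff, Set.mem_setOf_eq, Ideal.span_singleton_le_iff_mem]
    exact tt_notMem hk hak
  obtain ⟨s, hs⟩ := @IsCompact.elim_finite_subcover _ (coarseLowerTopology RR) _ _ hcomp U hopen hcover
  set N := s.sup id with hN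
  have hb : Ideal.span {tt N} ∈ {a : Ideal RR | ∃ k : ℕ, 0 < k ∧ a ^ k = ⊥} := by
    refine ⟨N + 1, by omega, ?_⟩
    rw [Ideal.span_singleton_pow, tt_pow_eq_zero]
    simp
  have := hs hb
  obtain ⟨n, hn, hmem⟩ := Set.mem_iUnion₂.mp this
  apply hmem
  simp only [Set.mem_setOf_eq, Ideal.span_singleton_le_iff_mem]
  exact Ideal.mem_span_singleton.mpr (tt_dvd (Finset.le_sup (f := id) hn))
end

section
/- In the ring R = ∏_{i≥2} Z/2^i Z, the ascending chain of nilpotent principal ideals a_n generated by the elements f_n = (2̄, 2̄, ..., 2̄, 0, 0, ...) (with 2̄ in the first n coordinates) has no upper bound in the set of nilpotent ideals of R. -/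
/-- In `R = ∏_{i ≥ 2} ℤ/2^iℤ`, the ascending chain of nilpotent principal ideals
generated by `f_n = (2̄,…,2̄,0,0,…)` (the class of 2 in the first `n` coordinates,
i.e. for `i ≤ n+1`) has no upper bound among the nilpotent ideals. -/
theorem chain_no_nilpotent_upper_bound :
    letI R := (i : {i : ℕ // 2 ≤ i}) → ZMod (2 ^ (i : ℕ))
    letI f : ℕ → R := fun n i => if (i : ℕ) ≤ n + 1 then (2 : ZMod (2 ^ (i : ℕ))) else 0
    ¬ ∃ b : Ideal R, (∃ k : ℕ, 0 < k ∧ b ^ k = ⊥) ∧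
        ∀ n : ℕ, 1 ≤ n → Ideal.span {f n} ≤ b := by
  rintro ⟨b, ⟨k, hk, hbk⟩, hub⟩
  set g : (i : {i : ℕ // 2 ≤ i}) → ZMod (2 ^ (i : ℕ)) :=
    fun i => if (i : ℕ) ≤ k + 1 then (2 : ZMod (2 ^ (i : ℕ))) else 0 with hg
  have hmem : g ∈ b := hub k hk (Ideal.subset_span rfl)
  have hpow : g ^ k ∈ b ^ k := Ideal.pow_mem_pow hmem k
  rw [hbk] at hpow
  have hzero : g ^ k = 0 := hpow
  have hk1 : 2 ≤ k + 1 := by omega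
  have := congrFun hzero ⟨k + 1, hk1⟩
  simp only [Pi.pow_apply, Pi.zero_apply] at this
  have hf : g ⟨k + 1, hk1⟩ = (2 : ZMod (2 ^ (k + 1))) := by simp [hg]
  rw [hf] at this
  have h2 : ((2 : ℕ) : ZMod (2 ^ (k + 1))) ^ k = 0 := by exact_mod_cast this
  rw [← Nat.cast_pow, ZMod.natCast_eq_zero_iff] at h2
  exact absurd (Nat.le_of_dvd (by positivity) h2)
    (by simpa using Nat.not_succ_le_self k ∘ (Nat.pow_le_pow_iff_right (by norm_num)).mp)
end

section
/- Let R be a commutative ring in which every maximal ideal is regular (contains a non-zerodivisor). Then the space Reg(R) of proper regular ideals of R, with the coarse lower topology, is quasi-compact. -/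
/-- If every maximal ideal of `R` is regular (contains a non-zerodivisor), then
the space of proper regular ideals is quasi-compact. -/
theorem reg_isCompact_of_max_regular {R : Type*} [CommRing R]
    (hR : ∀ m : Ideal R, m.IsMaximal → ∃ x ∈ m, x ∈ nonZeroDivisors R) :
    letI := coarseLowerTopology R
    IsCompact {a : Ideal R | a ≠ ⊤ ∧ ∃ x ∈ a, x ∈ nonZeroDivisors R} := by
  letI := coarseLowerTopology R
  rw [isCompact_iff_ultrafilter_le_nhds]
  intro f hf
  set S : Set (Ideal R) := {b : Ideal R | {i : Ideal R | b ≤ i} ∈ f} with hS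
  have hJ : sSup S ≠ ⊤ := by
    intro htop
    have h1 : (1 : R) ∈ sSup S := htop ▸ Submodule.mem_top
    obtain ⟨t, htS, h1t⟩ := Submodule.mem_sSup_iff_exists_finset.mp h1
    -- the set of ideals containing all elements of t is in f
    have hmem : {i : Ideal R | ∀ b ∈ t, b ≤ i} ∈ f := by
      have : {i : Ideal R | ∀ b ∈ t, b ≤ i} = ⋂ b ∈ t, {i : Ideal R | b ≤ i} := by
        ext i; simp [Set.mem_iInter]
      rw [this]
      exact (Filter.biInter_finset_mem t).mpr fun b hb => htS hb
    have hne : ({i : Ideal R | ∀ b ∈ t, b ≤ i} ∩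
        {a : Ideal R | a ≠ ⊤ ∧ ∃ x ∈ a, x ∈ nonZeroDivisors R}).Nonempty := by
      exact f.nonempty_of_mem (Filter.inter_mem hmem (Filter.le_principal_iff.mp hf))
    obtain ⟨i, hi1, hi2, _⟩ := hne
    apply hi2
    rw [Ideal.eq_top_iff_one]
    exact (iSup_le fun b => iSup_le fun hb => hi1 b hb : (⨆ b ∈ t, b) ≤ i) h1t
  obtain ⟨m, hm, hJm⟩ := Ideal.exists_le_maximal _ hJ
  refine ⟨m, ⟨hm.ne_top, hR m hm⟩, ?_⟩
  rw [coarseLowerTopology, TopologicalSpace.nhds_generateFrom]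
  refine le_iInf fun U => le_iInf fun hU => ?_
  obtain ⟨hmU, b, rfl⟩ := hU
  rw [Filter.le_principal_iff]
  exact Ultrafilter.compl_mem_iff_notMem.mpr
    (fun hbf => hmU (le_trans (le_sSup (show b ∈ S from hbf)) hJm))
end

section
/- The space Reg(Z) of nonzero proper ideals of the integers, with the coarse lower topology, is an irreducible topological space but is not sober. -/
lemma regZ_key {U : Set (Ideal ℤ)}
    (hU : TopologicalSpace.GenerateOpen
      {U : Set (Ideal ℤ) | ∃ a : Ideal ℤ, U = {i : Ideal ℤ | a ≤ i}ᶜ} U)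
    {x : Ideal ℤ} (hx : x ∈ U) :
    ∃ N : ℕ, ∀ p : ℕ, p.Prime → N < p → Ideal.span {(p : ℤ)} ∈ U := by
  induction hU with
  | basic V hV =>
    obtain ⟨a, rfl⟩ := hV
    simp only [Set.mem_compl_iff, Set.mem_setOf_eq] at hx
    have ha : a ≠ ⊥ := fun h => hx (h ▸ bot_le)
    obtain ⟨n, rfl⟩ := (IsPrincipalIdealRing.principal a).principal
    have hn : n ≠ 0 := by
      rintro rfl
      exact ha (by simp)
    refine ⟨n.natAbs, fun p hp hlt => ?_⟩
    simp only [Ideal.submodule_span_eq, Set.mem_compl_iff, Set.mem_setOf_eq]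
    intro hle
    rw [Ideal.span_singleton_le_span_singleton] at hle
    have : p ∣ n.natAbs := by
      have := Int.natAbs_dvd_natAbs.mpr hle
      simpa using this
    exact absurd (Nat.le_of_dvd (Int.natAbs_pos.mpr hn) this) (not_le.mpr hlt)
  | univ => exact ⟨1, fun _ _ _ => trivial⟩
  | inter V W _ _ ihV ihW =>
    obtain ⟨N₁, h₁⟩ := ihV hx.1
    obtain ⟨N₂, h₂⟩ := ihW hx.2
    exact ⟨max N₁ N₂, fun p hp hlt =>
      ⟨h₁ p hp (lt_of_le_of_lt (le_max_left _ _) hlt),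
       h₂ p hp (lt_of_le_of_lt (le_max_right _ _) hlt)⟩⟩
  | sUnion S _ ih =>
    obtain ⟨V, hVS, hxV⟩ := hx
    obtain ⟨N, h⟩ := ih V hVS hxV
    exact ⟨N, fun p hp hlt => ⟨V, hVS, h p hp hlt⟩⟩

lemma regZ_prime_mem {p : ℕ} (hp : p.Prime) :
    Ideal.span {(p : ℤ)} ∈ {a : Ideal ℤ | a ≠ ⊥ ∧ a ≠ ⊤} := by
  constructor
  · rw [Ne, Ideal.span_singleton_eq_bot]
    exact_mod_cast hp.ne_zero
  · rw [Ne, Ideal.span_singleton_eq_top, Int.isUnit_iff]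
    have h2 := hp.two_le
    rintro (h | h) <;> omega

/-- The space `Reg(ℤ)` of nonzero proper ideals of `ℤ`, with the coarse lower
topology, is irreducible but not sober. -/
theorem regZ_irreducible_not_sober :
    letI := coarseLowerTopology ℤ
    IrreducibleSpace {a : Ideal ℤ | a ≠ ⊥ ∧ a ≠ ⊤} ∧
      ¬ QuasiSober {a : Ideal ℤ | a ≠ ⊥ ∧ a ≠ ⊤} := by
  letI := coarseLowerTopology ℤ
  set X : Set (Ideal ℤ) := {a : Ideal ℤ | a ≠ ⊥ ∧ a ≠ ⊤} with hX
  have hirr : IsIrreducible X := by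
    constructor
    · exact ⟨Ideal.span {(2 : ℤ)}, regZ_prime_mem Nat.prime_two⟩
    · rintro U V hU hV ⟨x, hxX, hxU⟩ ⟨y, hyX, hyV⟩
      obtain ⟨N₁, h₁⟩ := regZ_key hU hxU
      obtain ⟨N₂, h₂⟩ := regZ_key hV hyV
      obtain ⟨p, hple, hp⟩ := Nat.exists_infinite_primes (max N₁ N₂ + 1)
      have hlt₁ : N₁ < p := lt_of_lt_of_le (by omega) hple
      have hlt₂ : N₂ < p := lt_of_lt_of_le (by omega) hple
      exact ⟨Ideal.span {(p : ℤ)}, regZ_prime_mem hp,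
        h₁ p hp hlt₁, h₂ p hp hlt₂⟩
  refine ⟨Subtype.irreducibleSpace hirr, ?_⟩
  intro hsob
  haveI := Subtype.irreducibleSpace hirr
  obtain ⟨ξ, hξ⟩ := hsob.sober (IrreducibleSpace.isIrreducible_univ X) isClosed_univ
  -- the upper set of ξ is closed and contains ξ, hence contains everything
  have hclosed : IsClosed {i : Ideal ℤ | (ξ : Ideal ℤ) ≤ i} := by
    constructor
    exact TopologicalSpace.GenerateOpen.basic _ ⟨(ξ : Ideal ℤ), rfl⟩
  have hsub : (Set.univ : Set X) ⊆ Subtype.val ⁻¹' {i : Ideal ℤ | (ξ : Ideal ℤ) ≤ i} := by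
    rw [← hξ]
    exact closure_minimal (by simp) (hclosed.preimage continuous_subtype_val)
  -- get generator of ξ
  obtain ⟨n, hn⟩ := (IsPrincipalIdealRing.principal (ξ : Ideal ℤ)).principal
  have hn0 : n ≠ 0 := by
    rintro rfl
    exact ξ.2.1 (by rw [hn]; simp)
  obtain ⟨p, hple, hp⟩ := Nat.exists_infinite_primes (n.natAbs + 1)
  have hmem : (⟨Ideal.span {(p : ℤ)}, regZ_prime_mem hp⟩ : X) ∈ (Set.univ : Set X) :=
    Set.mem_univ _
  have hle := hsub hmem
  simp only [Set.mem_preimage, Set.mem_setOf_eq] at hle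
  rw [hn, Ideal.submodule_span_eq, Ideal.span_singleton_le_span_singleton] at hle
  have : p ∣ n.natAbs := by
    have := Int.natAbs_dvd_natAbs.mpr hle
    simpa using this
  have := Nat.le_of_dvd (Int.natAbs_pos.mpr hn0) this
  omega
end

section
/- Let R be a zero-dimensional commutative ring that is not local. Then the space Prm(R) of primary ideals of R, with the coarse lower topology, is not irreducible. -/
section Aux

variable {R : Type*} [CommRing R]

/-- In a zero-dimensional commutative ring, every element is strongly π-regular. -/
lemma aux_exists_pow_eq (hdim : ∀ p : Ideal R, p.IsPrime → p.IsMaximal) (x : R) :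
    ∃ (n : ℕ) (a : R), x ^ (n + 1) = a * x ^ (n + 2) := by
  by_contra hcon
  push_neg at hcon
  -- the multiplicative set of elements x^n * (1 - a*x)
  set S : Submonoid R :=
    { carrier := {r | ∃ (n : ℕ) (a : R), r = x ^ n * (1 - a * x)}
      one_mem' := ⟨0, 0, by ring⟩
      mul_mem' := by
        rintro r s ⟨n, a, rfl⟩ ⟨m, b, rfl⟩
        exact ⟨n + m, a + b - a * b * x, by ring⟩ } with hS
  have h0 : (0 : R) ∉ S := by
    rintro ⟨n, a, h0⟩
    have hx : x ^ (n + 1) = a * x ^ (n + 2) := by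
      have : x ^ n = a * x ^ (n + 1) := by
        linear_combination (-1 : R) * h0
      calc x ^ (n + 1) = x ^ n * x := by ring
        _ = a * x ^ (n + 1) * x := by rw [this]
        _ = a * x ^ (n + 2) := by ring
    exact hcon n a hx
  have hdisj : Disjoint ((⊥ : Ideal R) : Set R) (S : Set R) := by
    rw [Set.disjoint_left]
    rintro r hr hrS
    simp only [SetLike.mem_coe, Ideal.mem_bot] at hr
    exact h0 (hr ▸ hrS)
  obtain ⟨p, hp, -, hpd⟩ := Ideal.exists_le_prime_disjoint ⊥ S hdisj
  have hxp : x ∉ p := by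
    intro hx
    exact Set.disjoint_left.1 hpd hx ⟨1, 0, by ring⟩
  obtain ⟨y, i, hi, hyi⟩ := (hdim p hp).exists_inv hxp
  have : (1 : R) - y * x ∈ p := by
    have : (1 : R) - y * x = i := by linear_combination -hyi
    rw [this]; exact hi
  exact Set.disjoint_left.1 hpd this ⟨0, y, by ring⟩

/-- From strong π-regularity we extract an idempotent. -/
lemma aux_exists_idem (hdim : ∀ p : Ideal R, p.IsPrime → p.IsMaximal) (x : R) :
    ∃ (e : R) (m : ℕ), IsIdempotentElem e ∧ (x ^ (m + 1)) ∣ e ∧ x ^ (m + 1) * (1 - e) = 0 := by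
  obtain ⟨n, a, hx⟩ := aux_exists_pow_eq hdim x
  -- x^(n+1) = a^k * x^(n+1+k) for all k
  have key : ∀ k : ℕ, x ^ (n + 1) = a ^ k * x ^ (n + 1 + k) := by
    intro k
    induction k with
    | zero => simp
    | succ k ih =>
      calc x ^ (n + 1) = a ^ k * x ^ (n + 1 + k) := ih
        _ = a ^ k * (x ^ (n + 1) * x ^ k) := by ring
        _ = a ^ k * (a * x ^ (n + 2) * x ^ k) := by rw [hx]
        _ = a ^ (k + 1) * x ^ (n + 1 + (k + 1)) := by ring
  refine ⟨a ^ (n + 1) * x ^ (n + 1), n, ?_, ⟨a ^ (n + 1), mul_comm _ _⟩, ?_⟩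
  · unfold IsIdempotentElem
    calc a ^ (n + 1) * x ^ (n + 1) * (a ^ (n + 1) * x ^ (n + 1))
        = a ^ (n + 1) * (a ^ (n + 1) * x ^ (n + 1 + (n + 1))) := by ring
      _ = a ^ (n + 1) * x ^ (n + 1) := by rw [← key (n + 1)]
  · have := key (n + 1)
    calc x ^ (n + 1) * (1 - a ^ (n + 1) * x ^ (n + 1))
        = x ^ (n + 1) - a ^ (n + 1) * x ^ (n + 1 + (n + 1)) := by ring
      _ = 0 := by rw [← this]; ring

end Aux

/-- If `R` is zero-dimensional (every prime is maximal) and not local, then the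
space of primary ideals is not irreducible. -/
theorem prm_not_irreducible {R : Type*} [CommRing R]
    (hdim : ∀ p : Ideal R, p.IsPrime → p.IsMaximal) (hloc : ¬ IsLocalRing R) :
    letI := coarseLowerTopology R
    ¬ IrreducibleSpace {a : Ideal R | a.IsPrimary} := by
  intro h
  by_cases hnt : Nontrivial R
  case neg =>
    -- trivial ring: there are no primary ideals at all
    rw [not_nontrivial_iff_subsingleton] at hnt
    obtain ⟨q, hq⟩ := h.toNonempty
    exact hq.ne_top (Subsingleton.elim _ _)
  case pos =>
    -- two distinct maximal ideals
    have hne : ¬ ∃! I : Ideal R, I.IsMaximal := fun h' => hloc (IsLocalRing.of_unique_max_ideal h')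
    obtain ⟨m₁, hm₁⟩ := Ideal.exists_maximal R
    have : ∃ m₂ : Ideal R, m₂.IsMaximal ∧ m₂ ≠ m₁ := by
      by_contra hcon
      push_neg at hcon
      exact hne ⟨m₁, hm₁, fun y hy => hcon y hy⟩
    obtain ⟨m₂, hm₂, hm12⟩ := this
    -- an element of m₂ not in m₁
    have hnle : ¬ m₂ ≤ m₁ := fun hle => hm12 (hm₂.eq_of_le hm₁.ne_top hle)
    obtain ⟨x, hxm₂, hxm₁⟩ := SetLike.not_le_iff_exists.1 hnle
    -- idempotent e with e ∈ m₂ and 1 - e ∈ m₁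
    obtain ⟨e, m, he, hdvd, hzero⟩ := aux_exists_idem hdim x
    have hem₂ : e ∈ m₂ := by
      obtain ⟨c, rfl⟩ := hdvd
      exact Ideal.mul_mem_right _ _ (Ideal.pow_mem_of_mem _ hxm₂ _ (Nat.succ_pos m))
    have h1em₁ : 1 - e ∈ m₁ := by
      have h0 : x ^ (m + 1) * (1 - e) ∈ m₁ := by rw [hzero]; exact m₁.zero_mem
      rcases hm₁.isPrime.mem_or_mem h0 with h | h
      · exact absurd (hm₁.isPrime.mem_of_pow_mem _ h) hxm₁
      · exact h
    have hem₂' : e ∉ m₁ := fun hc =>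
      hm₁.ne_top (Ideal.eq_top_of_isUnit_mem _ (by simpa using m₁.add_mem hc h1em₁) isUnit_one)
    have h1em₂ : 1 - e ∉ m₂ := fun hc =>
      hm₂.ne_top (Ideal.eq_top_of_isUnit_mem _ (by simpa using m₂.add_mem hem₂ hc) isUnit_one)
    -- the two disjoint open sets
    letI := coarseLowerTopology R
    have hopen : ∀ a : R, IsOpen ({i : Ideal R | Ideal.span {a} ≤ i}ᶜ) :=
      fun a => TopologicalSpace.GenerateOpen.basic _ ⟨Ideal.span {a}, rfl⟩
    set P : Set (Ideal R) := {a : Ideal R | a.IsPrimary} with hP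
    have hpre := h.isPreirreducible_univ
    set U : Set P := Subtype.val ⁻¹' ({i : Ideal R | Ideal.span {e} ≤ i}ᶜ) with hU
    set V : Set P := Subtype.val ⁻¹' ({i : Ideal R | Ideal.span {1 - e} ≤ i}ᶜ) with hV
    have hUo : IsOpen U := (hopen e).preimage continuous_subtype_val
    have hVo : IsOpen V := (hopen (1 - e)).preimage continuous_subtype_val
    have hm₁P : m₁ ∈ P := hm₁.isPrime.isPrimary
    have hm₂P : m₂ ∈ P := hm₂.isPrime.isPrimary
    have hUne : (Set.univ ∩ U).Nonempty := by
      refine ⟨⟨m₁, hm₁P⟩, Set.mem_univ _, ?_⟩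
      simp only [hU, Set.mem_preimage, Set.mem_compl_iff, Set.mem_setOf_eq,
        Ideal.span_singleton_le_iff_mem]
      exact hem₂'
    have hVne : (Set.univ ∩ V).Nonempty := by
      refine ⟨⟨m₂, hm₂P⟩, Set.mem_univ _, ?_⟩
      simp only [hV, Set.mem_preimage, Set.mem_compl_iff, Set.mem_setOf_eq,
        Ideal.span_singleton_le_iff_mem]
      exact h1em₂
    obtain ⟨⟨q, hqP⟩, -, hqU, hqV⟩ := hpre U V hUo hVo hUne hVne
    simp only [hU, hV, Set.mem_inter_iff, Set.mem_preimage, Set.mem_compl_iff,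
      Set.mem_setOf_eq, Ideal.span_singleton_le_iff_mem] at hqU hqV
    -- but every primary ideal contains e or 1 - e
    have hqprim := Ideal.isPrimary_iff.1 hqP
    have h0q : e * (1 - e) ∈ q := by
      have : e * (1 - e) = 0 := by
        have := he
        unfold IsIdempotentElem at this
        linear_combination -this
      rw [this]; exact q.zero_mem
    rcases hqprim.2 h0q with hc | hc
    · exact hqU hc
    · obtain ⟨k, hk⟩ := hc
      rcases Nat.eq_zero_or_pos k with rfl | hkpos
      · exact hqprim.1 ((Ideal.eq_top_iff_one _).2 (by simpa using hk))
      · have h1e : IsIdempotentElem (1 - e) := he.one_sub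
        obtain ⟨k, rfl⟩ := Nat.exists_eq_succ_of_ne_zero hkpos.ne'
        rw [h1e.pow_succ_eq] at hk
        exact hqV hk
end

section
/- Let R be a one-dimensional integral domain. Then the space Prm(R) of primary ideals of R, with the coarse lower topology, is sober. -/
open Topology
section Aux

variable {R : Type*} [CommRing R]

/-- Every open set in the coarse lower topology is a lower set. -/
lemma coarseLower_isLowerSet {U : Set (Ideal R)}
    (h : IsOpen[coarseLowerTopology R] U) : IsLowerSet U := by
  induction h with
  | basic V hV =>
    obtain ⟨a, rfl⟩ := hV
    intro i j hji hi hc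
    exact hi (le_trans hc hji)
  | univ => exact isLowerSet_univ
  | inter U V _ _ hU hV => exact hU.inter hV
  | sUnion s _ hs => exact isLowerSet_sUnion hs

lemma coarseLower_isOpen_basic (a : Ideal R) :
    IsOpen[coarseLowerTopology R] {i : Ideal R | a ≤ i}ᶜ :=
  TopologicalSpace.GenerateOpen.basic _ ⟨a, rfl⟩

lemma coarseLower_isClosed_Ici (a : Ideal R) :
    IsClosed[coarseLowerTopology R] {i : Ideal R | a ≤ i} := by
  letI := coarseLowerTopology R
  constructor
  exact TopologicalSpace.GenerateOpen.basic _ ⟨a, rfl⟩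

lemma coarseLower_closure_singleton (y : Ideal R) :
    letI := coarseLowerTopology R
    closure {y} = {i : Ideal R | y ≤ i} := by
  letI := coarseLowerTopology R
  apply subset_antisymm
  · exact closure_minimal (by simp) (coarseLower_isClosed_Ici y)
  · intro z hz
    rw [mem_closure_iff]
    intro U hU hzU
    exact ⟨y, (coarseLower_isLowerSet hU) hz hzU, rfl⟩

end Aux

/-- If `R` is a one-dimensional integral domain, the space of primary ideals is sober. -/
theorem prm_sober_of_dim_one_domain {R : Type*} [CommRing R] [IsDomain R]
    (hdim : ringKrullDim R = 1) :
    letI := coarseLowerTopology R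
    QuasiSober {a : Ideal R | a.IsPrimary} := by
  letI := coarseLowerTopology R
  classical
  -- In a one-dimensional domain, every nonzero prime ideal is maximal.
  have hmax : ∀ p : Ideal R, p.IsPrime → p ≠ ⊥ → p.IsMaximal := by
    intro p hp hp0
    obtain ⟨m, hm, hpm⟩ := Ideal.exists_le_maximal p hp.ne_top
    rcases eq_or_lt_of_le hpm with rfl | hlt
    · exact hm
    · exfalso
      have hstep : ∀ i : Fin 2,
          (![⟨⊥, Ideal.bot_prime⟩, ⟨p, hp⟩, ⟨m, hm.isPrime⟩] :
            Fin 3 → PrimeSpectrum R) i.castSucc <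
          (![⟨⊥, Ideal.bot_prime⟩, ⟨p, hp⟩, ⟨m, hm.isPrime⟩] :
            Fin 3 → PrimeSpectrum R) i.succ := by
        intro i
        fin_cases i
        · exact (PrimeSpectrum.asIdeal_lt_asIdeal _ _).mp (bot_lt_iff_ne_bot.mpr hp0)
        · exact (PrimeSpectrum.asIdeal_lt_asIdeal _ _).mp hlt
      have h2 : ((⟨2, _, hstep⟩ : LTSeries (PrimeSpectrum R)).length : WithBot ℕ∞) ≤
          Order.krullDim (PrimeSpectrum R) := Order.LTSeries.length_le_krullDim _
      rw [show Order.krullDim (PrimeSpectrum R) = ringKrullDim R from rfl, hdim] at h2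
      norm_num at h2
  constructor
  intro S hS hSc
  set T : Set (Ideal R) := Subtype.val '' S with hT
  set x : Ideal R := sInf T with hxdef
  have hxle : ∀ z : {a : Ideal R | a.IsPrimary}, z ∈ S → x ≤ (z : Ideal R) :=
    fun z hz => sInf_le ⟨z, hz, rfl⟩
  have hmemx : ∀ r : R, r ∈ x ↔ ∀ z : {a : Ideal R | a.IsPrimary}, z ∈ S → r ∈ (z : Ideal R) := by
    intro r
    rw [hxdef, Submodule.mem_sInf]
    constructor
    · intro h z hz; exact h _ ⟨z, hz, rfl⟩
    · rintro h _ ⟨z, hz, rfl⟩; exact h z hz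
  obtain ⟨z₀, hz₀⟩ := hS.nonempty
  -- Step A : every primary ideal containing x belongs to S.
  have stepA : ∀ y : {a : Ideal R | a.IsPrimary}, x ≤ (y : Ideal R) → y ∈ S := by
    intro y hxy
    by_contra hyS
    have hop : IsOpen Sᶜ := hSc.isOpen_compl
    rw [isOpen_induced_iff] at hop
    obtain ⟨U, hU, hUE⟩ := hop
    have hyU : (y : Ideal R) ∈ U := by
      have : y ∈ Sᶜ := hyS
      rw [← hUE] at this
      exact this
    obtain ⟨v, hv, hyv, hvU⟩ :=
      (TopologicalSpace.isTopologicalBasis_of_subbasis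
        (rfl : coarseLowerTopology R = TopologicalSpace.generateFrom _)).exists_subset_of_mem_open
        hyU hU
    obtain ⟨f, ⟨hffin, hfsub⟩, rfl⟩ := hv
    -- the finite family of closed sets
    set Z : Finset (Set {a : Ideal R | a.IsPrimary}) :=
      hffin.toFinset.image (fun W => Subtype.val ⁻¹' Wᶜ) with hZ
    have hcov : S ⊆ ⋃₀ ↑Z := by
      intro z hz
      have hznU : (z : Ideal R) ∉ U := by
        intro hc
        have : z ∈ Sᶜ := by rw [← hUE]; exact hc
        exact this hz
      have : (z : Ideal R) ∉ ⋂₀ f := fun hc => hznU (hvU hc)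
      rw [Set.mem_sInter] at this
      push_neg at this
      obtain ⟨W, hWf, hWz⟩ := this
      exact ⟨Subtype.val ⁻¹' Wᶜ, by
        simp only [hZ, Finset.coe_image, Set.mem_image, Finset.mem_coe, Set.Finite.mem_toFinset]
        exact ⟨W, hWf, rfl⟩, hWz⟩
    have hZc : ∀ z ∈ Z, IsClosed z := by
      intro z hz
      rw [hZ, Finset.mem_image] at hz
      obtain ⟨W, hWf, rfl⟩ := hz
      rw [Set.Finite.mem_toFinset] at hWf
      obtain ⟨A, rfl⟩ := hfsub hWf
      rw [compl_compl]
      exact (coarseLower_isClosed_Ici A).preimage continuous_subtype_val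
    obtain ⟨z, hzZ, hSz⟩ := (isIrreducible_iff_sUnion_isClosed.mp hS) Z hZc hcov
    rw [hZ, Finset.mem_image] at hzZ
    obtain ⟨W, hWf, rfl⟩ := hzZ
    rw [Set.Finite.mem_toFinset] at hWf
    obtain ⟨A, rfl⟩ := hfsub hWf
    have hAx : A ≤ x := by
      rw [hxdef]
      apply le_sInf
      rintro _ ⟨z, hz, rfl⟩
      have := hSz hz
      rw [compl_compl] at this
      exact this
    have : (y : Ideal R) ∈ {i : Ideal R | A ≤ i}ᶜ := hyv _ hWf
    exact this (le_trans hAx hxy)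
  -- x is a proper ideal
  have hxtop : x ≠ ⊤ := by
    intro hc
    have := hxle z₀ hz₀
    rw [hc, top_le_iff] at this
    exact (Ideal.isPrimary_iff.mp z₀.2).1 this
  -- Step B : x is primary
  have hxprimary : x.IsPrimary := by
    by_cases hx0 : x = ⊥
    · rw [hx0]; exact Ideal.bot_prime.isPrimary
    · rw [Ideal.isPrimary_iff]
      refine ⟨hxtop, fun {a b} hab => ?_⟩
      by_contra hcon
      push_neg at hcon
      obtain ⟨ha, hb⟩ := hcon
      -- a member of S not containing a
      have : ¬ ∀ z : {a : Ideal R | a.IsPrimary}, z ∈ S → a ∈ (z : Ideal R) :=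
        fun h => ha ((hmemx a).mpr h)
      push_neg at this
      obtain ⟨z₁, hz₁S, hz₁a⟩ := this
      -- a prime ideal over x avoiding b
      rw [Ideal.radical_eq_sInf, Submodule.mem_sInf] at hb
      push_neg at hb
      obtain ⟨p, ⟨hxp, hp⟩, hbp⟩ := hb
      have hpS : (⟨p, hp.isPrimary⟩ : {a : Ideal R | a.IsPrimary}) ∈ S := stepA _ hxp
      -- find n, d with b ^ n * (1 - b * d) ∈ x
      have hM : ∃ (n : ℕ) (d : R), b ^ n * (1 - b * d) ∈ x := by
        by_contra hM
        push_neg at hM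
        set M : Submonoid R :=
          { carrier := {r | ∃ (n : ℕ) (d : R), r = b ^ n * (1 - b * d)}
            one_mem' := ⟨0, 0, by ring⟩
            mul_mem' := by
              rintro r s ⟨n, d, rfl⟩ ⟨m, e, rfl⟩
              exact ⟨n + m, d + e - b * d * e, by ring⟩ } with hMdef
        have hdis : Disjoint (x : Set R) (M : Set R) := by
          rw [Set.disjoint_left]
          rintro r hr ⟨n, d, rfl⟩
          exact hM n d hr
        obtain ⟨q, hq, hxq, hqd⟩ := Ideal.exists_le_prime_disjoint x M hdis
        have hbq : b ∉ q := by
          intro hbq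
          exact (Set.disjoint_left.mp hqd hbq) ⟨1, 0, by ring⟩
        have hq0 : q ≠ ⊥ := by
          intro hc
          exact hx0 (le_bot_iff.mp (hc ▸ hxq))
        obtain ⟨d, c, hc, hdc⟩ := (hmax q hq hq0).exists_inv hbq
        have h1bd : 1 - b * d ∈ q := by
          have h1 : 1 - b * d = c := by linear_combination -hdc
          rwa [h1]
        exact (Set.disjoint_left.mp hqd h1bd) ⟨0, d, by ring⟩
      obtain ⟨n, d, hnd⟩ := hM
      -- two open sets
      have hU₁o : IsOpen (Subtype.val ⁻¹' {i : Ideal R | Ideal.span {a} ≤ i}ᶜ :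
          Set {a : Ideal R | a.IsPrimary}) :=
        (coarseLower_isOpen_basic (Ideal.span {a})).preimage continuous_subtype_val
      have hU₂o : IsOpen (Subtype.val ⁻¹' {i : Ideal R | Ideal.span {b ^ n} ≤ i}ᶜ :
          Set {a : Ideal R | a.IsPrimary}) :=
        (coarseLower_isOpen_basic (Ideal.span {b ^ n})).preimage continuous_subtype_val
      have hne₁ : (S ∩ Subtype.val ⁻¹' {i : Ideal R | Ideal.span {a} ≤ i}ᶜ).Nonempty := by
        refine ⟨z₁, hz₁S, ?_⟩
        simp only [Set.mem_preimage, Set.mem_compl_iff, Set.mem_setOf_eq,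
          Ideal.span_singleton_le_iff_mem]
        exact hz₁a
      have hne₂ : (S ∩ Subtype.val ⁻¹' {i : Ideal R | Ideal.span {b ^ n} ≤ i}ᶜ).Nonempty := by
        refine ⟨⟨p, hp.isPrimary⟩, hpS, ?_⟩
        simp only [Set.mem_preimage, Set.mem_compl_iff, Set.mem_setOf_eq,
          Ideal.span_singleton_le_iff_mem]
        exact fun hc => hbp (hp.mem_of_pow_mem n hc)
      obtain ⟨w, hwS, hw₁, hw₂⟩ := hS.2 _ _ hU₁o hU₂o hne₁ hne₂
      simp only [Set.mem_inter_iff, Set.mem_preimage, Set.mem_compl_iff, Set.mem_setOf_eq,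
        Ideal.span_singleton_le_iff_mem] at hw₁ hw₂
      have hwprim := Ideal.isPrimary_iff.mp w.2
      have hbw : b ∈ (w : Ideal R).radical :=
        (hwprim.2 (hxle w hwS hab)).resolve_left hw₁
      have h1bdw : (1 - b * d) ∈ (w : Ideal R).radical := by
        have := hwprim.2 (show b ^ n * (1 - b * d) ∈ (w : Ideal R) from hxle w hwS hnd)
        exact this.resolve_left hw₂
      have hone : (1 : R) ∈ (w : Ideal R).radical := by
        have := Ideal.add_mem _ h1bdw (Ideal.mul_mem_right d _ hbw)
        simpa using this
      have : (w : Ideal R).radical = ⊤ := (Ideal.eq_top_iff_one _).mpr hone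
      rw [Ideal.radical_eq_top] at this
      exact hwprim.1 this
  -- the generic point
  refine ⟨⟨x, hxprimary⟩, ?_⟩
  rw [isGenericPoint_def]
  ext z
  rw [closure_subtype, Set.image_singleton, coarseLower_closure_singleton]
  constructor
  · intro hz
    exact stepA z hz
  · intro hz
    exact hxle z hz
end

section
/- Let R be a commutative ring such that Prm(R) is sober. Then for every maximal ideal m of R, the space Prm(R_m) of primary ideals of the localization R_m is sober. -/
/-!
For a localization `S` of `R` at a submonoid `M`, the coarse lower topology is the lower topology
of the inclusion order, and `comap : Ideal S → Ideal R` is an order embedding with left adjoint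
`map`; so `comap` makes `Prm(S)` a subspace of `Prm(R)`. Its image, the primary ideals disjoint
from `M`, is closed under passing to smaller primary ideals, i.e. under generalization. A subspace
with this property inherits sobriety: the generic point of the closure of the image of an
irreducible closed set generalizes the points of that image, hence lies in the subspace.
-/

open Set Topology

theorem Topology.IsInducing.quasiSober_of_stableUnderGeneralization_range
    {X Y : Type*} [TopologicalSpace X] [TopologicalSpace Y] [QuasiSober Y] {f : X → Y}
    (hf : IsInducing f) (hrange : StableUnderGeneralization (range f)) : QuasiSober X where
  sober {T} hT hTc := by
    obtain ⟨y, hy⟩ :=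
      QuasiSober.sober (hT.image f hf.continuous.continuousOn).closure isClosed_closure
    obtain ⟨t, ht⟩ := hT.nonempty
    obtain ⟨x, rfl⟩ : y ∈ range f :=
      hrange (hy.specializes (subset_closure (mem_image_of_mem f ht))) (mem_range_self t)
    refine ⟨x, ?_⟩
    rw [IsGenericPoint, hf.closure_eq_preimage_closure_image, image_singleton, hy.def,
      ← hf.closure_eq_preimage_closure_image, hTc.closure_eq]

theorem Topology.IsLower.specializes_iff_le {α : Type*} [Preorder α] [TopologicalSpace α]
    [IsLower α] {a b : α} : a ⤳ b ↔ a ≤ b := by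
  rw [specializes_iff_mem_closure, IsLower.closure_singleton, mem_Ici]

theorem GaloisInsertion.induced_lower {α β : Type*} [Preorder α] [Preorder β]
    {l : α → β} {u : β → α} (gi : GaloisInsertion l u) :
    (Topology.lower α).induced u = Topology.lower β := by
  rw [Topology.lower, Topology.lower, induced_generateFrom_eq]
  congr 1
  ext s
  constructor
  · rintro ⟨_, ⟨a, rfl⟩, rfl⟩
    exact ⟨l a, by ext; simp [gi.gc.le_iff_le]⟩
  · rintro ⟨b, rfl⟩
    exact ⟨(Ici (u b))ᶜ, ⟨u b, rfl⟩, by ext; simp [gi.u_le_u_iff]⟩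

theorem Topology.IsLower.isInducing_of_galoisInsertion {α β : Type*} [Preorder α] [Preorder β]
    [TopologicalSpace α] [IsLower α] [TopologicalSpace β] [IsLower β]
    {l : α → β} {u : β → α} (gi : GaloisInsertion l u) : IsInducing u :=
  ⟨by rw [IsLower.topology_eq α, IsLower.topology_eq β, gi.induced_lower]⟩

def Ideal.primaryComap {R S : Type*} [CommRing R] [CommRing S] (f : R →+* S) :
    {a : Ideal S | a.IsPrimary} → {a : Ideal R | a.IsPrimary} :=
  fun q => ⟨q.1.comap f, q.2.comap f⟩

namespace IsLocalization

variable {R : Type*} [CommRing R] {S : Type*} [CommRing S] [Algebra R S]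

theorem isPrimary_of_isPrimary_under (M : Submonoid R) [IsLocalization M S] {J : Ideal S}
    (hJ : (J.under R).IsPrimary) :
    J.IsPrimary := by
  rw [Ideal.isPrimary_iff] at hJ ⊢
  refine ⟨fun hJtop => hJ.1 (hJtop ▸ Ideal.comap_top), fun {x y} hxy => ?_⟩
  obtain ⟨a, s, rfl⟩ := exists_mk'_eq M x
  obtain ⟨b, t, rfl⟩ := exists_mk'_eq M y
  rw [← mk'_mul, mk'_mem_iff, ← Ideal.mem_comap] at hxy
  rw [mk'_mem_iff, mk'_mem_iff, ← Ideal.mem_comap, ← Ideal.mem_comap, Ideal.comap_radical]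
  exact hJ.2 hxy

theorem isPrimary_map_of_isPrimary_disjoint (M : Submonoid R) [IsLocalization M S]
    {I : Ideal R} (hI : I.IsPrimary) (hM : Disjoint (M : Set R) I) :
    (I.map (algebraMap R S)).IsPrimary :=
  isPrimary_of_isPrimary_under M ((under_map_of_isPrimary_disjoint M S hI hM).symm ▸ hI)

theorem isInducing_primaryComap (M : Submonoid R) [IsLocalization M S]
    [TopologicalSpace (Ideal R)] [IsLower (Ideal R)] [TopologicalSpace (Ideal S)]
    [IsLower (Ideal S)] : IsInducing (Ideal.primaryComap (algebraMap R S)) := by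
  have hcomap : IsInducing (Ideal.comap (algebraMap R S)) :=
    IsLower.isInducing_of_galoisInsertion <|
      (Ideal.gc_map_comap (algebraMap R S)).toGaloisInsertion fun J => (map_under M S J).ge
  rw [← IsInducing.subtypeVal.of_comp_iff]
  exact hcomap.comp IsInducing.subtypeVal

theorem stableUnderGeneralization_range_primaryComap (M : Submonoid R) [IsLocalization M S]
    [TopologicalSpace (Ideal R)] [IsLower (Ideal R)] :
    StableUnderGeneralization (range (Ideal.primaryComap (algebraMap R S))) := by
  rintro _ p hspec ⟨q, rfl⟩
  rw [subtype_specializes_iff, IsLower.specializes_iff_le] at hspec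
  have hM : Disjoint (M : Set R) p.1 :=
    ((disjoint_under_iff M S q.1).2 q.2.ne_top).mono_right hspec
  exact ⟨⟨_, isPrimary_map_of_isPrimary_disjoint M p.2 hM⟩,
    Subtype.ext (under_map_of_isPrimary_disjoint M S p.2 hM)⟩

theorem quasiSober_primary (M : Submonoid R) [IsLocalization M S]
    [TopologicalSpace (Ideal R)] [IsLower (Ideal R)] [TopologicalSpace (Ideal S)]
    [IsLower (Ideal S)] [QuasiSober {a : Ideal R | a.IsPrimary}] :
    QuasiSober {a : Ideal S | a.IsPrimary} :=
  (isInducing_primaryComap M).quasiSober_of_stableUnderGeneralization_range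
    (stableUnderGeneralization_range_primaryComap M)

end IsLocalization

/-- If the space of primary ideals of `R` is sober, then so is the space of primary
ideals of every localization of `R` at a maximal ideal. -/
theorem prm_localization_sober {R : Type*} [CommRing R]
    (h : letI := coarseLowerTopology R; QuasiSober {a : Ideal R | a.IsPrimary})
    (m : Ideal R) (hm : m.IsMaximal) :
    letI := hm.isPrime
    letI := coarseLowerTopology (Localization.AtPrime m)
    QuasiSober {a : Ideal (Localization.AtPrime m) | a.IsPrimary} :=
  letI := hm.isPrime
  letI := coarseLowerTopology R
  letI := coarseLowerTopology (Localization.AtPrime m)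
  haveI := isLower_coarseLowerTopology R
  haveI := isLower_coarseLowerTopology (Localization.AtPrime m)
  haveI : QuasiSober {a : Ideal R | a.IsPrimary} := h
  IsLocalization.quasiSober_primary m.primeCompl
end

section
/- Let R be a Noetherian local commutative ring. Then the space Prm(R) of primary ideals of R, with the coarse lower topology, is sober if and only if every proper ideal of R is primary. -/
section Aux

attribute [local instance] coarseLowerTopology

variable {R : Type*} [CommRing R]

lemma cLT_isClosed (a : Ideal R) : IsClosed {i : Ideal R | a ≤ i} := by
  rw [← isOpen_compl_iff]
  exact TopologicalSpace.isOpen_generateFrom_of_mem ⟨a, rfl⟩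

/-- Basic neighborhood extraction for the coarse lower topology. -/
lemma cLT_nhds {U : Set (Ideal R)} {x : Ideal R} (hU : IsOpen U) (hx : x ∈ U) :
    ∃ B : Set (Ideal R), B.Finite ∧ (∀ b ∈ B, ¬ b ≤ x) ∧
      ∀ j : Ideal R, (∀ b ∈ B, ¬ b ≤ j) → j ∈ U := by
  have hbasis := TopologicalSpace.isTopologicalBasis_of_subbasis
    (rfl : coarseLowerTopology R = TopologicalSpace.generateFrom _)
  obtain ⟨v, ⟨f, ⟨hfin, hsub⟩, rfl⟩, hxv, hvU⟩ := hbasis.exists_subset_of_mem_open hx hU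
  haveI := hfin.to_subtype
  choose g hg using fun u : f => hsub u.2
  refine ⟨Set.range g, Set.finite_range g, ?_, ?_⟩
  · rintro b ⟨u, rfl⟩
    have := hxv u.1 u.2
    rw [hg u] at this
    exact this
  · intro j hj
    apply hvU
    intro u hu
    show j ∈ (⟨u, hu⟩ : f).1
    rw [hg ⟨u, hu⟩]
    exact hj (g ⟨u, hu⟩) ⟨⟨u, hu⟩, rfl⟩

/-- Krull intersection theorem variant. -/
lemma krull_inf [IsNoetherianRing R] [IsLocalRing R] {a : Ideal R} (ha : a ≠ ⊤) :
    (⨅ n : ℕ, a ⊔ IsLocalRing.maximalIdeal R ^ n) = a := by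
  set m := IsLocalRing.maximalIdeal R
  haveI : Nontrivial (R ⧸ a) := Ideal.Quotient.nontrivial_iff.mpr ha
  haveI : IsLocalRing (R ⧸ a) := IsLocalRing.of_surjective' _ Ideal.Quotient.mk_surjective
  have hker : RingHom.ker (Ideal.Quotient.mk a) = a := Ideal.mk_ker
  have hcm : ∀ I : Ideal R,
      Ideal.comap (Ideal.Quotient.mk a) (Ideal.map (Ideal.Quotient.mk a) I) = I ⊔ a := by
    intro I
    rw [Ideal.comap_map_of_surjective _ Ideal.Quotient.mk_surjective]
    congr 1
  have hmt : Ideal.map (Ideal.Quotient.mk a) m ≠ ⊤ := by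
    intro h
    have h2 := hcm m
    rw [h, Ideal.comap_top, sup_eq_left.2 (IsLocalRing.le_maximalIdeal ha)] at h2
    exact (IsLocalRing.maximalIdeal.isMaximal R).ne_top h2.symm
  have hbot : (⨅ n : ℕ, Ideal.map (Ideal.Quotient.mk a) m ^ n) = ⊥ :=
    Ideal.iInf_pow_eq_bot_of_isLocalRing _ hmt
  have key : Ideal.comap (Ideal.Quotient.mk a)
      (⨅ n : ℕ, Ideal.map (Ideal.Quotient.mk a) m ^ n) = a := by
    rw [hbot]
    exact hker
  rw [Ideal.comap_iInf] at key
  have heach : ∀ n : ℕ,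
      Ideal.comap (Ideal.Quotient.mk a) (Ideal.map (Ideal.Quotient.mk a) m ^ n)
        = a ⊔ m ^ n := by
    intro n
    rw [← Ideal.map_pow, hcm (m ^ n), sup_comm]
  calc (⨅ n : ℕ, a ⊔ m ^ n)
      = ⨅ n : ℕ, Ideal.comap (Ideal.Quotient.mk a) (Ideal.map (Ideal.Quotient.mk a) m ^ n) :=
        iInf_congr fun n => (heach n).symm
    _ = a := key

lemma primary_sup_pow [IsNoetherianRing R] [IsLocalRing R] {a : Ideal R} (ha : a ≠ ⊤) (n : ℕ) :
    (a ⊔ IsLocalRing.maximalIdeal R ^ (n + 1)).IsPrimary := by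
  set m := IsLocalRing.maximalIdeal R
  have hrad : (a ⊔ m ^ (n + 1)).radical = m := by
    apply le_antisymm
    · have hle : a ⊔ m ^ (n + 1) ≤ m :=
        sup_le (IsLocalRing.le_maximalIdeal ha) (Ideal.pow_le_self n.succ_ne_zero)
      calc (a ⊔ m ^ (n + 1)).radical ≤ m.radical := Ideal.radical_mono hle
        _ = m := (IsLocalRing.maximalIdeal.isMaximal R).isPrime.radical
    · have hrp : (m ^ (n + 1)).radical = m := by
        rw [Ideal.radical_pow _ n.succ_ne_zero]
        exact (IsLocalRing.maximalIdeal.isMaximal R).isPrime.radical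
      calc m = (m ^ (n + 1)).radical := hrp.symm
        _ ≤ (a ⊔ m ^ (n + 1)).radical := Ideal.radical_mono le_sup_right
  apply Ideal.isPrimary_of_isMaximal_radical
  rw [hrad]
  exact IsLocalRing.maximalIdeal.isMaximal R

/-- An irreducible set contained in a finite union of closed sets is contained in one of them. -/
lemma irr_subset_of_subset_union {α ι : Type*} [TopologicalSpace α] {S : Set α}
    (hS : IsIrreducible S) {B : Set ι} (hB : B.Finite) {Z : ι → Set α}
    (hZ : ∀ i, IsClosed (Z i)) (hcov : S ⊆ ⋃ i ∈ B, Z i) : ∃ i ∈ B, S ⊆ Z i := by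
  classical
  have : ∀ t : Finset ι, S ⊆ ⋃ i ∈ t, Z i → ∃ i ∈ t, S ⊆ Z i := by
    intro t
    induction t using Finset.induction_on with
    | empty =>
      intro hc
      obtain ⟨x, hx⟩ := hS.nonempty
      simpa using hc hx
    | @insert a s hnotmem ih =>
      intro hc
      have hc' : S ⊆ Z a ∪ ⋃ i ∈ s, Z i := by
        intro x hx
        have := hc hx
        simp only [Finset.mem_insert, Set.mem_iUnion] at this
        obtain ⟨i, (rfl | hi), hzi⟩ := this
        · exact Or.inl hzi
        · exact Or.inr (Set.mem_biUnion hi hzi)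
      rcases (isPreirreducible_iff_isClosed_union_isClosed.1 hS.2) _ _ (hZ a)
          (isClosed_biUnion_finset fun i _ => hZ i) hc' with h | h
      · exact ⟨a, Finset.mem_insert_self a s, h⟩
      · obtain ⟨i, hi, hsub⟩ := ih h
        exact ⟨i, Finset.mem_insert_of_mem hi, hsub⟩
  have hcov' : S ⊆ ⋃ i ∈ hB.toFinset, Z i := by
    intro x hx
    obtain ⟨i, hi, hzi⟩ := Set.mem_iUnion₂.1 (hcov hx)
    exact Set.mem_iUnion₂.2 ⟨i, hB.mem_toFinset.2 hi, hzi⟩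
  obtain ⟨i, hi, hsub⟩ := this hB.toFinset hcov'
  exact ⟨i, hB.mem_toFinset.1 hi, hsub⟩

end Aux

/-- For a Noetherian local ring `R`, the space of primary ideals is sober iff every
proper ideal of `R` is primary. -/
theorem prm_sober_iff_local {R : Type*} [CommRing R] [IsNoetherianRing R]
    (hR : IsLocalRing R) :
    letI := coarseLowerTopology R
    (QuasiSober {a : Ideal R | a.IsPrimary} ↔ ∀ a : Ideal R, a ≠ ⊤ → a.IsPrimary) := by
  haveI := hR
  letI := coarseLowerTopology R
  set m := IsLocalRing.maximalIdeal R with hm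
  constructor
  · -- sober → every proper ideal primary
    intro hsob a ha
    -- The closed set of primary ideals containing `a`
    set S : Set {i : Ideal R | i.IsPrimary} := Subtype.val ⁻¹' {i : Ideal R | a ≤ i} with hS
    have hSclosed : IsClosed S := (cLT_isClosed a).preimage continuous_subtype_val
    have hmem : ∀ n : ℕ, (⟨a ⊔ m ^ (n + 1), primary_sup_pow ha n⟩ : {i : Ideal R | i.IsPrimary}) ∈ S :=
      fun n => show a ≤ a ⊔ m ^ (n + 1) from le_sup_left
    have hSne : S.Nonempty := ⟨⟨m, (IsLocalRing.maximalIdeal.isMaximal R).isPrime.isPrimary⟩,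
      IsLocalRing.le_maximalIdeal ha⟩
    -- existence of uniform exponent avoiding a finite set of ideals
    have hkrull := krull_inf (R := R) ha
    have havoid : ∀ t : Finset (Ideal R), (∀ b ∈ t, ¬ b ≤ a) →
        ∃ N : ℕ, ∀ b ∈ t, ¬ b ≤ a ⊔ m ^ (N + 1) := by
      classical
      intro t
      induction t using Finset.induction_on with
      | empty => exact fun _ => ⟨0, by simp⟩
      | @insert c s hnotmem ih =>
        intro hb
        obtain ⟨N, hN⟩ := ih fun b hbs => hb b (Finset.mem_insert_of_mem hbs)
        have hc : ¬ c ≤ a := hb c (Finset.mem_insert_self c s)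
        have : ∃ k : ℕ, ¬ c ≤ a ⊔ m ^ (k + 1) := by
          by_contra hcon
          push_neg at hcon
          apply hc
          rw [← hkrull]
          refine le_iInf fun k => ?_
          cases k with
          | zero => simp
          | succ k => exact hcon k
        obtain ⟨K, hK⟩ := this
        refine ⟨max N K, fun b hbmem => ?_⟩
        have hmono : ∀ {p q : ℕ}, p ≤ q → a ⊔ m ^ (q + 1) ≤ a ⊔ m ^ (p + 1) :=
          fun {p q} hpq => sup_le_sup_left (Ideal.pow_le_pow_right (Nat.succ_le_succ hpq)) a
        rcases Finset.mem_insert.1 hbmem with rfl | hbs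
        · exact fun hle => hK (hle.trans (hmono (le_max_right N K)))
        · exact fun hle => hN b hbs (hle.trans (hmono (le_max_left N K)))
    -- S is irreducible
    have hSirr : IsIrreducible S := by
      refine ⟨hSne, fun U V hU hV ⟨q1, hq1S, hq1U⟩ ⟨q2, hq2S, hq2V⟩ => ?_⟩
      obtain ⟨U', hU', rfl⟩ := isOpen_induced_iff.1 hU
      obtain ⟨V', hV', rfl⟩ := isOpen_induced_iff.1 hV
      obtain ⟨B1, hB1fin, hB1, hB1U⟩ := cLT_nhds hU' hq1U
      obtain ⟨B2, hB2fin, hB2, hB2V⟩ := cLT_nhds hV' hq2V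
      classical
      have hnotle : ∀ b ∈ (hB1fin.union hB2fin).toFinset, ¬ b ≤ a := by
        intro b hb hba
        rw [Set.Finite.mem_toFinset] at hb
        rcases hb with hb | hb
        · exact hB1 b hb (hba.trans hq1S)
        · exact hB2 b hb (hba.trans hq2S)
      obtain ⟨N, hN⟩ := havoid _ hnotle
      refine ⟨⟨a ⊔ m ^ (N + 1), primary_sup_pow ha N⟩, hmem N, ?_, ?_⟩
      · exact hB1U _ fun b hb => hN b (by rw [Set.Finite.mem_toFinset]; exact Or.inl hb)
      · exact hB2V _ fun b hb => hN b (by rw [Set.Finite.mem_toFinset]; exact Or.inr hb)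
    obtain ⟨x, hx⟩ := hsob.sober hSirr hSclosed
    -- x ∈ S, so a ≤ x
    have hxS : x ∈ S := hx ▸ subset_closure rfl
    -- x ≤ every a ⊔ m^(n+1)
    have hxle : ∀ n : ℕ, (x : Ideal R) ≤ a ⊔ m ^ (n + 1) := by
      intro n
      by_contra hcon
      have hqn : (⟨a ⊔ m ^ (n + 1), primary_sup_pow ha n⟩ : {i : Ideal R | i.IsPrimary})
          ∈ closure {x} := hx ▸ hmem n
      have hW : IsOpen (Subtype.val ⁻¹' {i : Ideal R | (x : Ideal R) ≤ i}ᶜ :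
          Set {i : Ideal R | i.IsPrimary}) :=
        (cLT_isClosed (x : Ideal R)).isOpen_compl.preimage continuous_subtype_val
      obtain ⟨y, hyW, hy⟩ := mem_closure_iff.1 hqn _ hW hcon
      rw [Set.mem_singleton_iff] at hy
      subst hy
      simp only [Set.mem_preimage, Set.mem_compl_iff, Set.mem_setOf_eq] at hyW
      exact hyW le_rfl
    have hxlea : (x : Ideal R) ≤ a := by
      rw [← hkrull]
      refine le_iInf fun n => ?_
      cases n with
      | zero => simp
      | succ k => exact hxle k
    have hxa : (x : Ideal R) = a := le_antisymm hxlea hxS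
    exact hxa ▸ x.2
  · -- all proper ideals primary → sober
    intro h
    refine ⟨fun {S} hirr hclosed => ?_⟩
    obtain ⟨q0, hq0⟩ := hirr.nonempty
    set x0 : Ideal R := sInf (Subtype.val '' S) with hx0def
    have hx0le : ∀ q ∈ S, x0 ≤ (q : Ideal R) := fun q hq => sInf_le ⟨q, hq, rfl⟩
    have hx0ne : x0 ≠ ⊤ := fun htop =>
      q0.2.1 (top_le_iff.1 (htop ▸ hx0le q0 hq0))
    have hx0prim : x0.IsPrimary := h x0 hx0ne
    set x : {i : Ideal R | i.IsPrimary} := ⟨x0, hx0prim⟩ with hxdef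
    -- x ∈ S
    have hxS : x ∈ S := by
      by_contra hxnS
      obtain ⟨D, hD, rfl⟩ := isClosed_induced_iff.1 hclosed
      have hx0D : x0 ∈ Dᶜ := hxnS
      obtain ⟨B, hBfin, hB, hBsub⟩ := cLT_nhds hD.isOpen_compl hx0D
      have hcov : Subtype.val ⁻¹' D ⊆ ⋃ b ∈ B, (Subtype.val ⁻¹' {i : Ideal R | b ≤ i} :
          Set {i : Ideal R | i.IsPrimary}) := by
        intro q hq
        by_contra hq'
        simp only [Set.mem_iUnion, Set.mem_preimage, Set.mem_setOf_eq, not_exists] at hq'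
        exact hBsub (q : Ideal R) (fun b hb => hq' b hb) hq
      obtain ⟨b, hbB, hbsub⟩ := irr_subset_of_subset_union hirr hBfin
        (fun b => (cLT_isClosed b).preimage continuous_subtype_val) hcov
      refine hB b hbB ?_
      exact le_sInf fun c ⟨q, hq, hqc⟩ => hqc ▸ hbsub hq
    refine ⟨x, le_antisymm (closure_minimal (Set.singleton_subset_iff.2 hxS) hclosed) ?_⟩
    intro q hq
    rw [mem_closure_iff]
    intro o ho hqo
    obtain ⟨U', hU', rfl⟩ := isOpen_induced_iff.1 ho
    obtain ⟨B, hBfin, hB, hBsub⟩ := cLT_nhds hU' hqo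
    refine ⟨x, ?_, rfl⟩
    exact hBsub x0 fun b hb hbx => hB b hb (hbx.trans (hx0le q hq))
end

section
/- Let R be a Noetherian commutative ring. The space Prm(R) of primary ideals of R, with the coarse lower topology, is sober (equivalently, spectral) if and only if R is isomorphic to a finite direct product of rings each of which is either zero-dimensional or a one-dimensional integral domain. -/
open Ideal

namespace PrmSoberAux

variable {R : Type*} [CommRing R]

/-- `a` is contained in every primary ideal containing `q`. -/
def Covers (q a : Ideal R) : Prop := ∀ p : Ideal R, p.IsPrimary → q ≤ p → a ≤ p

/-- Ideal-theoretic irreducibility of the family of primary ideals over `q`. -/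
def Irr (q : Ideal R) : Prop :=
  (∃ p : Ideal R, p.IsPrimary ∧ q ≤ p) ∧
    ∀ s : Finset (Ideal R),
      (∀ p : Ideal R, p.IsPrimary → q ≤ p → ∃ a ∈ s, a ≤ p) → ∃ a ∈ s, Covers q a

/-- Every irreducible family of primary ideals has a minimum. -/
def PP (R : Type*) [CommRing R] : Prop :=
  ∀ q : Ideal R, Irr q → ∃ p₀ : Ideal R, p₀.IsPrimary ∧ q ≤ p₀ ∧ Covers q p₀

theorem krull_inter [IsNoetherianRing R] (q m : Ideal R) {z : R}
    (hz : ∀ n : ℕ, z ∈ q ⊔ m ^ n) : ∃ i ∈ m, z * (1 - i) ∈ q := by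
  set f := Ideal.Quotient.mk q with hf
  have hmem : f z ∈ ⨅ n : ℕ, (m.map f) ^ n • (⊤ : Submodule (R ⧸ q) (R ⧸ q)) := by
    rw [Submodule.mem_iInf]
    intro n
    have h1 : f z ∈ (m.map f) ^ n := by
      have h2 := Ideal.mem_map_of_mem f (hz n)
      rwa [Ideal.map_sup, Ideal.map_pow, Ideal.map_quotient_self, bot_sup_eq] at h2
    simpa [smul_eq_mul, Ideal.mul_top] using h1
  obtain ⟨r, hr⟩ := (Ideal.mem_iInf_smul_pow_eq_bot_iff (m.map f) (f z)).mp hmem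
  obtain ⟨i, him, hi⟩ := (Ideal.mem_map_iff_of_surjective f Ideal.Quotient.mk_surjective).mp r.2
  refine ⟨i, him, ?_⟩
  have h0 : f (z * (1 - i)) = 0 := by
    have h2 : (r : R ⧸ q) * f z = f z := hr
    rw [_root_.map_mul, _root_.map_sub, _root_.map_one, hi]
    calc f z * (1 - (r : R ⧸ q)) = f z - (r : R ⧸ q) * f z := by ring
    _ = 0 := by rw [h2, sub_self]
  exact (Ideal.Quotient.eq_zero_iff_mem).mp h0

theorem radical_sup_pow {m : Ideal R} (hm : m.IsMaximal) {q : Ideal R} (hq : q ≤ m)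
    {n : ℕ} (hn : n ≠ 0) : (q ⊔ m ^ n).radical = m := by
  apply le_antisymm
  · calc (q ⊔ m ^ n).radical ≤ m.radical :=
          Ideal.radical_mono (sup_le hq (Ideal.pow_le_self hn))
    _ = m := hm.isPrime.radical
  · intro x hx
    exact ⟨n, (le_sup_right : m ^ n ≤ q ⊔ m ^ n) (Ideal.pow_mem_pow hx n)⟩

theorem isPrimary_sup_pow {m : Ideal R} (hm : m.IsMaximal) {q : Ideal R} (hq : q ≤ m)
    {n : ℕ} (hn : n ≠ 0) : (q ⊔ m ^ n).IsPrimary :=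
  Ideal.isPrimary_of_isMaximal_radical (by rw [radical_sup_pow hm hq hn]; exact hm)

theorem not_PP_of_pair [IsNoetherianRing R] {m Q₁ Q₂ : Ideal R} (hm : m.IsMaximal)
    (h₁ : Q₁.IsPrimary) (h₂ : Q₂.IsPrimary) (hm₁ : Q₁ ≤ m) (hm₂ : Q₂ ≤ m)
    (hnp : ¬ (Q₁ ⊓ Q₂).IsPrimary) : ¬ PP R := by
  intro hPP
  classical
  set q := Q₁ ⊓ Q₂ with hqdef
  have hqm : q ≤ m := inf_le_left.trans hm₁
  have h1m : (1 : R) ∉ m := fun h => hm.ne_top ((Ideal.eq_top_iff_one m).mpr h)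
  have hkey : ∀ z : R, (∀ n : ℕ, z ∈ q ⊔ m ^ n) → z ∈ q := by
    intro z hz
    obtain ⟨i, him, hzi⟩ := krull_inter q m hz
    have hrad : ∀ Q : Ideal R, Q.IsPrimary → Q ≤ m → q ≤ Q → z ∈ Q := by
      intro Q hQ hQm hqQ
      rcases (Ideal.isPrimary_iff.mp hQ).2 (hqQ hzi) with h | h
      · exact h
      · exfalso
        have : (1 - i) ∈ m := (Ideal.radical_mono hQm).trans hm.isPrime.radical.le h
        exact h1m (by simpa using m.add_mem this him)
    exact ⟨hrad Q₁ h₁ hm₁ inf_le_left, hrad Q₂ h₂ hm₂ inf_le_right⟩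
  have hIrr : Irr q := by
    refine ⟨⟨Q₁, h₁, inf_le_left⟩, ?_⟩
    intro s hs
    by_contra hno
    push_neg at hno
    have hx : ∀ a ∈ s, ∃ n : ℕ, ¬ a ≤ q ⊔ m ^ n := by
      intro a ha
      have hnc := hno a ha
      simp only [Covers, not_forall] at hnc
      obtain ⟨p, hp, hqp, hap⟩ := hnc
      have haq : ¬ a ≤ q := fun h => hap (h.trans hqp)
      obtain ⟨x, hxa, hxq⟩ := SetLike.not_le_iff_exists.mp haq
      by_contra hall
      push_neg at hall
      exact hxq (hkey x (fun n => hall n hxa))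
    choose! g hg using hx
    set N := (s.sup g) + 1 with hN
    obtain ⟨a, ha, hle⟩ := hs (q ⊔ m ^ N) (isPrimary_sup_pow hm hqm (Nat.succ_ne_zero _))
      le_sup_left
    refine hg a ha (hle.trans (sup_le_sup_left (Ideal.pow_le_pow_right ?_) q))
    exact (Finset.le_sup ha).trans (Nat.le_succ _)
  obtain ⟨p₀, hp₀, hqp₀, hcov⟩ := hPP q hIrr
  have heq : p₀ = q := le_antisymm (le_inf (hcov Q₁ h₁ inf_le_left) (hcov Q₂ h₂ inf_le_right)) hqp₀
  exact hnp (heq ▸ hp₀)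

section Noetherian
variable [IsNoetherianRing R]

theorem minimal_eq_of_le_maximal (hPP : PP R) {p₁ p₂ m : Ideal R}
    (h₁ : p₁ ∈ minimalPrimes R) (h₂ : p₂ ∈ minimalPrimes R) (hm : m.IsMaximal)
    (hm₁ : p₁ ≤ m) (hm₂ : p₂ ≤ m) : p₁ = p₂ := by
  by_contra hne
  have hp₁ : p₁.IsPrime := h₁.1.1
  have hp₂ : p₂.IsPrime := h₂.1.1
  have hnle₁ : ¬ p₁ ≤ p₂ := fun h => hne (le_antisymm h (h₂.2 ⟨hp₁, bot_le⟩ h))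
  have hnle₂ : ¬ p₂ ≤ p₁ := fun h => hne (le_antisymm (h₁.2 ⟨hp₂, bot_le⟩ h) h)
  obtain ⟨x, hx₁, hx₂⟩ := SetLike.not_le_iff_exists.mp hnle₁
  obtain ⟨y, hy₂, hy₁⟩ := SetLike.not_le_iff_exists.mp hnle₂
  have hnp : ¬ (p₁ ⊓ p₂).IsPrimary := by
    intro h
    rcases (Ideal.isPrimary_iff.mp h).2 (show x * y ∈ p₁ ⊓ p₂ from
      ⟨Ideal.mul_mem_right _ _ hx₁, Ideal.mul_mem_left _ _ hy₂⟩) with hc | hc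
    · exact hx₂ hc.2
    · rw [Ideal.radical_inf, hp₁.radical, hp₂.radical] at hc
      exact hy₁ hc.1
  exact not_PP_of_pair hm hp₁.isPrimary hp₂.isPrimary hm₁ hm₂ hnp hPP

theorem nonmax_prime_minimal (hPP : PP R) {p : Ideal R} (hp : p.IsPrime)
    (hnm : ¬ p.IsMaximal) : p ∈ minimalPrimes R := by
  by_contra hmin
  haveI := hp
  obtain ⟨p₀, hp₀, hp₀p⟩ := Ideal.exists_minimalPrimes_le (I := (⊥ : Ideal R)) (J := p) bot_le
  have hne : p₀ ≠ p := fun h => hmin (h ▸ hp₀)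
  obtain ⟨z, hzp, hzp₀⟩ :=
    SetLike.not_le_iff_exists.mp (fun h : p ≤ p₀ => hne (le_antisymm hp₀p h))
  obtain ⟨m, hmmax, hpm⟩ := Ideal.exists_le_maximal p hp.ne_top
  have hpnem : p ≠ m := fun h => hnm (h ▸ hmmax)
  have h1m : (1 : R) ∉ m := fun h => hmmax.ne_top ((Ideal.eq_top_iff_one m).mpr h)
  have hp₀prime : p₀.IsPrime := hp₀.1.1
  have hzk : ∃ k : ℕ, z ∉ m ^ k := by
    by_contra hall
    push_neg at hall
    obtain ⟨i, him, hzi⟩ := krull_inter (R := R) ⊥ m (z := z)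
      (fun n => (le_sup_right : m ^ n ≤ ⊥ ⊔ m ^ n) (hall n))
    have hz0 : z * (1 - i) = 0 := Ideal.mem_bot.mp hzi
    rcases hp₀prime.mem_or_mem (show z * (1 - i) ∈ p₀ from hz0 ▸ p₀.zero_mem) with h | h
    · exact hzp₀ h
    · exact h1m (by simpa using m.add_mem ((hp₀p.trans hpm) h) him)
  obtain ⟨k, hzk⟩ := hzk
  have hk0 : k ≠ 0 := by rintro rfl; exact hzk (by simp)
  obtain ⟨z', hz'm, hz'p⟩ :=
    SetLike.not_le_iff_exists.mp (fun h : m ≤ p => hpnem (le_antisymm hpm h))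
  have hQ₂ : (m ^ k).IsPrimary := Ideal.isPrimary_of_isMaximal_radical (I := m ^ k)
    (by rw [Ideal.radical_pow _ hk0, hmmax.isPrime.radical]; exact hmmax)
  have hnp : ¬ (p ⊓ m ^ k).IsPrimary := by
    intro h
    have hmem : z * z' ^ k ∈ p ⊓ m ^ k :=
      ⟨Ideal.mul_mem_right _ _ hzp, Ideal.mul_mem_left _ _ (Ideal.pow_mem_pow hz'm k)⟩
    rcases (Ideal.isPrimary_iff.mp h).2 hmem with hc | hc
    · exact hzk hc.2
    · rw [Ideal.radical_inf, hp.radical, Ideal.radical_pow _ hk0, hmmax.isPrime.radical] at hc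
      exact hz'p (hp.mem_of_pow_mem _ hc.1)
  exact not_PP_of_pair hmmax hp.isPrimary hQ₂ hpm (Ideal.pow_le_self hk0) hnp hPP

theorem unique_minimal_eq_bot (hPP : PP R) {p₀ : Ideal R} (h₀ : p₀ ∈ minimalPrimes R)
    (huniq : ∀ p ∈ minimalPrimes R, p = p₀)
    (hnz : ∃ p : Ideal R, p.IsPrime ∧ ¬ p.IsMaximal) : p₀ = ⊥ := by
  by_contra hbot
  have hp₀ : p₀.IsPrime := h₀.1.1
  obtain ⟨x, hx₀, hx0⟩ : ∃ x ∈ p₀, x ≠ (0 : R) := by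
    by_contra h
    push_neg at h
    exact hbot (le_antisymm (fun y hy => Ideal.mem_bot.mpr (h y hy)) bot_le)
  set J := (Submodule.span R {x}).annihilator with hJdef
  have hJtop : J ≠ ⊤ := by
    intro h
    have h1 : (1 : R) ∈ J := h ▸ Submodule.mem_top
    rw [hJdef, Submodule.mem_annihilator_span_singleton, one_smul] at h1
    exact hx0 h1
  obtain ⟨m, hmmax, hJm⟩ := Ideal.exists_le_maximal J hJtop
  haveI := hmmax.isPrime
  obtain ⟨p', hp', hp'm⟩ := Ideal.exists_minimalPrimes_le (I := (⊥ : Ideal R)) (J := m) bot_le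
  have hpm : p₀ ≤ m := (huniq p' hp') ▸ hp'm
  have h1m : (1 : R) ∉ m := fun h => hmmax.ne_top ((Ideal.eq_top_iff_one m).mpr h)
  have hpnem : p₀ ≠ m := by
    rintro rfl
    obtain ⟨pn, hpn, hpnm⟩ := hnz
    haveI := hpn
    obtain ⟨p'', hp'', hp''le⟩ := Ideal.exists_minimalPrimes_le (I := (⊥ : Ideal R)) (J := pn) bot_le
    have hle : p₀ ≤ pn := (huniq p'' hp'') ▸ hp''le
    exact hpnm ((hmmax.eq_of_le hpn.ne_top hle) ▸ hmmax)
  have hzk : ∃ k : ℕ, x ∉ m ^ k := by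
    by_contra hall
    push_neg at hall
    obtain ⟨i, him, hzi⟩ := krull_inter (R := R) ⊥ m (z := x)
      (fun n => (le_sup_right : m ^ n ≤ ⊥ ⊔ m ^ n) (hall n))
    have hz0 : x * (1 - i) = 0 := Ideal.mem_bot.mp hzi
    have h1J : (1 - i) ∈ J := by
      rw [hJdef, Submodule.mem_annihilator_span_singleton, smul_eq_mul, mul_comm]
      exact hz0
    exact h1m (by simpa using m.add_mem (hJm h1J) him)
  obtain ⟨k, hzk⟩ := hzk
  have hk0 : k ≠ 0 := by rintro rfl; exact hzk (by simp)
  obtain ⟨z', hz'm, hz'p⟩ :=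
    SetLike.not_le_iff_exists.mp (fun h : m ≤ p₀ => hpnem (le_antisymm hpm h))
  have hQ₂ : (m ^ k).IsPrimary := Ideal.isPrimary_of_isMaximal_radical (I := m ^ k)
    (by rw [Ideal.radical_pow _ hk0, hmmax.isPrime.radical]; exact hmmax)
  have hnp : ¬ (p₀ ⊓ m ^ k).IsPrimary := by
    intro h
    have hmem : x * z' ^ k ∈ p₀ ⊓ m ^ k :=
      ⟨Ideal.mul_mem_right _ _ hx₀, Ideal.mul_mem_left _ _ (Ideal.pow_mem_pow hz'm k)⟩
    rcases (Ideal.isPrimary_iff.mp h).2 hmem with hc | hc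
    · exact hzk hc.2
    · rw [Ideal.radical_inf, hp₀.radical, Ideal.radical_pow _ hk0, hmmax.isPrime.radical] at hc
      exact hz'p (hp₀.mem_of_pow_mem _ hc.1)
  exact not_PP_of_pair hmmax hp₀.isPrimary hQ₂ hpm (Ideal.pow_le_self hk0) hnp hPP

theorem exists_min_of_primes_maximal {q : Ideal R} (hq : q ≠ ⊤)
    (hmax : ∀ p : Ideal R, p.IsPrime → q ≤ p → p.IsMaximal) (hirr : Irr q) :
    ∃ p₀ : Ideal R, p₀.IsPrimary ∧ q ≤ p₀ ∧ Covers q p₀ := by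
  classical
  have hfin : q.minimalPrimes.Finite := by
    rw [Ideal.minimalPrimes_eq_comap]
    exact (minimalPrimes.finite_of_isNoetherianRing (R ⧸ q)).image _
  set S := hfin.toFinset with hSdef
  have hcoe : (S : Set (Ideal R)) = q.minimalPrimes := hfin.coe_toFinset
  have hmemS : ∀ {p : Ideal R}, p ∈ S ↔ p ∈ q.minimalPrimes := by
    intro p; rw [← hcoe]; rfl
  have hSprime : ∀ p ∈ S, p.IsPrime := fun p hp => (hmemS.mp hp).1.1
  have hSq : ∀ p ∈ S, q ≤ p := fun p hp => (hmemS.mp hp).1.2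
  have hSmax : ∀ p ∈ S, p.IsMaximal := fun p hp => hmax p (hSprime p hp) (hSq p hp)
  obtain ⟨n₀, hn₀⟩ := Ideal.exists_radical_pow_le_of_fg q (IsNoetherian.noetherian _)
  set n := n₀ + 1 with hndef
  have hn : q.radical ^ n ≤ q := (Ideal.pow_le_pow_right (Nat.le_succ n₀)).trans hn₀
  have hn0 : n ≠ 0 := Nat.succ_ne_zero _
  -- the radical of any primary ideal over q belongs to S
  have hkey : ∀ p : Ideal R, p.IsPrimary → q ≤ p → p.radical ∈ S := by
    intro p hp hqp
    have hrp : p.radical.IsPrime := Ideal.isPrime_radical hp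
    haveI := hrp
    have hqrp : q ≤ p.radical := hqp.trans Ideal.le_radical
    obtain ⟨m, hmS, hmrp⟩ := Ideal.exists_minimalPrimes_le (I := q) (J := p.radical) hqrp
    have hmmax : m.IsMaximal := hmax m hmS.1.1 hmS.1.2
    have : m = p.radical := hmmax.eq_of_le hrp.ne_top hmrp
    exact hmemS.mpr (this ▸ hmS)
  -- q has at least one minimal prime over it
  obtain ⟨mq, hmqmax, hqmq⟩ := Ideal.exists_le_maximal q hq
  haveI := hmqmax.isPrime
  obtain ⟨m₀, hm₀S, _⟩ := Ideal.exists_minimalPrimes_le (I := q) (J := mq) hqmq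
  have hm₀S' : m₀ ∈ S := hmemS.mpr hm₀S
  by_cases hsub : ∀ p₁ ∈ S, ∀ p₂ ∈ S, p₁ = p₂
  · -- q is itself primary
    have hSsingle : q.minimalPrimes = {m₀} := by
      apply Set.eq_singleton_iff_unique_mem.mpr
      exact ⟨hm₀S, fun p hp => hsub p (hmemS.mpr hp) m₀ hm₀S'⟩
    have hradq : q.radical = m₀ := by
      rw [← Ideal.sInf_minimalPrimes, hSsingle, sInf_singleton]
    have hqprimary : q.IsPrimary := Ideal.isPrimary_of_isMaximal_radical
      (by rw [hradq]; exact hSmax m₀ hm₀S')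
    exact ⟨q, hqprimary, le_refl q, fun p hp hqp => hqp⟩
  · -- at least two minimal primes over q: contradiction with irreducibility
    exfalso
    push_neg at hsub
    obtain ⟨m₁, hm₁, m₂, hm₂, hne⟩ := hsub
    have hprod : ∀ m ∈ S, (∏ p ∈ S.erase m, p ^ n) * m ^ n ≤ q := by
      intro m hm
      have h1 : (∏ p ∈ S.erase m, p ^ n) * m ^ n = ∏ p ∈ S, p ^ n := by
        rw [← Finset.prod_erase_mul S _ hm]
      rw [h1, Finset.prod_pow]
      refine (Ideal.pow_right_mono ?_ n).trans hn
      calc (∏ p ∈ S, p) ≤ S.inf id := Ideal.prod_le_inf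
      _ = sInf q.minimalPrimes := by rw [Finset.inf_id_eq_sInf, hcoe]
      _ = q.radical := Ideal.sInf_minimalPrimes
    set A : Ideal R → Ideal R := fun m => q ⊔ ∏ p ∈ S.erase m, p ^ n with hAdef
    -- if the radical of a primary ideal p over q differs from m, then A m ≤ p
    have hclaim1 : ∀ m ∈ S, ∀ p : Ideal R, p.IsPrimary → q ≤ p → p.radical ≠ m → A m ≤ p := by
      intro m hm p hp hqp hrne
      refine sup_le hqp ?_
      by_contra hnle
      obtain ⟨x, hxmem, hxp⟩ := SetLike.not_le_iff_exists.mp hnle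
      have hm_le : m ≤ p.radical := by
        intro z hz
        have hxz : x * z ^ n ∈ p := hqp ((hprod m hm) (Ideal.mul_mem_mul hxmem (Ideal.pow_mem_pow hz n)))
        rcases (Ideal.isPrimary_iff.mp hp).2 hxz with h | h
        · exact absurd h hxp
        · exact Ideal.mem_radical_of_pow_mem h
      exact hrne ((hmax m (hSprime m hm) (hSq m hm)).eq_of_le
        (Ideal.isPrime_radical hp).ne_top hm_le).symm
    have hcov : ∀ p : Ideal R, p.IsPrimary → q ≤ p → ∃ a ∈ ({A m₁, A m₂} : Finset (Ideal R)), a ≤ p := by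
      intro p hp hqp
      by_cases h1 : p.radical = m₁
      · exact ⟨A m₂, by simp, hclaim1 m₂ hm₂ p hp hqp (h1 ▸ hne)⟩
      · exact ⟨A m₁, by simp, hclaim1 m₁ hm₁ p hp hqp h1⟩
    obtain ⟨a, haS, hacov⟩ := hirr.2 {A m₁, A m₂} hcov
    -- but neither A m₁ nor A m₂ covers
    have hnocov : ∀ m ∈ S, ¬ Covers q (A m) := by
      intro m hm hcovm
      have hmmax := hSmax m hm
      have hqm : q ≤ m := hSq m hm
      have hple := hcovm (q ⊔ m ^ n) (isPrimary_sup_pow hmmax hqm hn0) le_sup_left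
      have hrad : (q ⊔ m ^ n).radical = m := radical_sup_pow hmmax hqm hn0
      have hprodle : ∏ p ∈ S.erase m, p ^ n ≤ m := by
        calc ∏ p ∈ S.erase m, p ^ n ≤ A m := le_sup_right
        _ ≤ q ⊔ m ^ n := hple
        _ ≤ (q ⊔ m ^ n).radical := Ideal.le_radical
        _ = m := hrad
      obtain ⟨p', hp'mem, hp'le⟩ := (hmmax.isPrime.prod_le).mp hprodle
      have hp'm : p' ≤ m := fun z hz => hmmax.isPrime.mem_of_pow_mem n (hp'le (Ideal.pow_mem_pow hz n))
      have : p' = m := (hSmax p' (Finset.mem_of_mem_erase hp'mem)).eq_of_le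
        hmmax.isPrime.ne_top hp'm
      exact (Finset.ne_of_mem_erase hp'mem) this
    rcases Finset.mem_insert.mp haS with rfl | haS'
    · exact hnocov m₁ hm₁ hacov
    · rw [Finset.mem_singleton.mp haS'] at hacov
      exact hnocov m₂ hm₂ hacov

theorem PP_of_allMaximal (h : ∀ p : Ideal R, p.IsPrime → p.IsMaximal) : PP R := by
  intro q hirr
  obtain ⟨p, hp, hqp⟩ := hirr.1
  have hq : q ≠ ⊤ := fun h' => (Ideal.isPrimary_iff.mp hp).1 (top_le_iff.mp (h' ▸ hqp))
  exact exists_min_of_primes_maximal hq (fun p hp _ => h p hp) hirr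

theorem PP_of_oneDimDomain [IsDomain R] (hdim : ringKrullDim R = 1) : PP R := by
  intro q hirr
  by_cases hq0 : q = ⊥
  · exact ⟨⊥, Ideal.bot_prime.isPrimary, hq0 ▸ le_refl q, fun p hp hqp => bot_le⟩
  · obtain ⟨p, hp, hqp⟩ := hirr.1
    have hq : q ≠ ⊤ := fun h' => (Ideal.isPrimary_iff.mp hp).1 (top_le_iff.mp (h' ▸ hqp))
    apply exists_min_of_primes_maximal hq ?_ hirr
    intro p hp hqp
    by_contra hnm
    obtain ⟨m, hmmax, hpm⟩ := Ideal.exists_le_maximal p hp.ne_top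
    have hpm' : p ≠ m := fun h => hnm (h ▸ hmmax)
    have hpbot : p ≠ ⊥ := fun h => hq0 (le_bot_iff.mp (h ▸ hqp))
    let x0 : PrimeSpectrum R := ⟨⊥, Ideal.bot_prime⟩
    let x1 : PrimeSpectrum R := ⟨p, hp⟩
    let x2 : PrimeSpectrum R := ⟨m, hmmax.isPrime⟩
    have h01 : x0 < x1 := (PrimeSpectrum.asIdeal_lt_asIdeal _ _).mp (bot_lt_iff_ne_bot.mpr hpbot)
    have h12 : x1 < x2 := (PrimeSpectrum.asIdeal_lt_asIdeal _ _).mp (lt_of_le_of_ne hpm hpm')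
    let l : LTSeries (PrimeSpectrum R) :=
      ((RelSeries.singleton _ x0).snoc x1 h01).snoc x2 (by exact h12)
    have hlen : (l.length : WithBot (WithTop ℕ)) ≤ ringKrullDim R :=
      Order.LTSeries.length_le_krullDim l
    rw [hdim] at hlen
    have : l.length = 2 := rfl
    rw [this] at hlen
    exact absurd (show ((2:ℕ) : WithBot ℕ∞) ≤ 1 from hlen) (by norm_num)

end Noetherian

section Prod

variable {A : Type*} {B : Type*} [CommRing A] [CommRing B]

theorem mem_radical_iff' {I : Ideal A} {x : A} : x ∈ I.radical ↔ ∃ n : ℕ, x ^ n ∈ I :=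
  Iff.rfl

theorem radical_prod (I : Ideal A) (J : Ideal B) :
    (Ideal.prod I J).radical = Ideal.prod I.radical J.radical := by
  ext ⟨x, y⟩
  constructor
  · rintro ⟨n, hx, hy⟩
    exact ⟨⟨n, hx⟩, ⟨n, hy⟩⟩
  · rintro ⟨⟨n, hx⟩, ⟨m, hy⟩⟩
    refine ⟨n + m, ?_, ?_⟩
    · rw [pow_add]; exact Ideal.mul_mem_right _ _ hx
    · rw [pow_add]; exact Ideal.mul_mem_left _ _ hy

theorem prod_le_prod_iff {I I' : Ideal A} {J J' : Ideal B} :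
    Ideal.prod I J ≤ Ideal.prod I' J' ↔ I ≤ I' ∧ J ≤ J' := by
  constructor
  · intro h
    constructor
    · intro x hx; exact (h (show ((x, 0) : A × B) ∈ Ideal.prod I J from ⟨hx, J.zero_mem⟩)).1
    · intro y hy; exact (h (show ((0, y) : A × B) ∈ Ideal.prod I J from ⟨I.zero_mem, hy⟩)).2
  · rintro ⟨h1, h2⟩ ⟨x, y⟩ hxy
    exact ⟨h1 hxy.1, h2 hxy.2⟩

theorem comap_fst_eq (p : Ideal A) :
    Ideal.comap (RingHom.fst A B) p = Ideal.prod p (⊤ : Ideal B) := by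
  ext ⟨x, y⟩; simp [Ideal.mem_comap, Ideal.mem_prod]

theorem isPrimary_prod_top {I : Ideal A} :
    (Ideal.prod I (⊤ : Ideal B)).IsPrimary ↔ I.IsPrimary := by
  rw [Ideal.isPrimary_iff, Ideal.isPrimary_iff]
  constructor
  · rintro ⟨hne, h⟩
    refine ⟨fun hI => hne (by rw [hI, Ideal.prod_top_top]), ?_⟩
    intro x y hxy
    rcases h (x := ((x, 1) : A × B)) (y := ((y, 1) : A × B))
        (show ((x, 1) : A × B) * (y, 1) ∈ Ideal.prod I ⊤ from ⟨hxy, trivial⟩) with hc | hc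
    · exact Or.inl hc.1
    · rw [radical_prod] at hc; exact Or.inr hc.1
  · rintro ⟨hne, h⟩
    refine ⟨fun hI => hne (Ideal.prod_inj.mp (hI.trans Ideal.prod_top_top.symm)).1, ?_⟩
    rintro ⟨x₁, x₂⟩ ⟨y₁, y₂⟩ hxy
    rcases h hxy.1 with hc | hc
    · exact Or.inl ⟨hc, trivial⟩
    · right; rw [radical_prod]; exact ⟨hc, ⟨1, trivial⟩⟩

theorem isPrimary_top_prod {J : Ideal B} :
    (Ideal.prod (⊤ : Ideal A) J).IsPrimary ↔ J.IsPrimary := by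
  rw [Ideal.isPrimary_iff, Ideal.isPrimary_iff]
  constructor
  · rintro ⟨hne, h⟩
    refine ⟨fun hJ => hne (by rw [hJ, Ideal.prod_top_top]), ?_⟩
    intro x y hxy
    rcases h (x := ((1, x) : A × B)) (y := ((1, y) : A × B))
        (show ((1, x) : A × B) * (1, y) ∈ Ideal.prod ⊤ J from ⟨trivial, hxy⟩) with hc | hc
    · exact Or.inl hc.2
    · rw [radical_prod] at hc; exact Or.inr hc.2
  · rintro ⟨hne, h⟩
    refine ⟨fun hJ => hne (Ideal.prod_inj.mp (hJ.trans Ideal.prod_top_top.symm)).2, ?_⟩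
    rintro ⟨x₁, x₂⟩ ⟨y₁, y₂⟩ hxy
    rcases h hxy.2 with hc | hc
    · exact Or.inl ⟨trivial, hc⟩
    · right; rw [radical_prod]; exact ⟨⟨1, trivial⟩, hc⟩

theorem primary_prod_cases {P : Ideal (A × B)} (hP : P.IsPrimary) :
    (∃ I : Ideal A, I.IsPrimary ∧ P = Ideal.prod I ⊤) ∨
      (∃ J : Ideal B, J.IsPrimary ∧ P = Ideal.prod ⊤ J) := by
  have hPeq := Ideal.ideal_prod_eq P
  set I := P.map (RingHom.fst A B) with hIdef
  set J := P.map (RingHom.snd A B) with hJdef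
  by_cases hJ : J = ⊤
  · left
    have hPI : P = Ideal.prod I ⊤ := by rw [hPeq, hJ]
    exact ⟨I, isPrimary_prod_top.mp (hPI ▸ hP), hPI⟩
  · by_cases hI : I = ⊤
    · right
      have hPJ : P = Ideal.prod ⊤ J := by rw [hPeq, hI]
      exact ⟨J, isPrimary_top_prod.mp (hPJ ▸ hP), hPJ⟩
    · exfalso
      have h10 : ((1, 0) : A × B) * (0, 1) ∈ P := by
        have : ((1, 0) : A × B) * (0, 1) = 0 := by ext <;> simp
        rw [this]; exact P.zero_mem
      rcases (Ideal.isPrimary_iff.mp hP).2 h10 with hc | hc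
      · rw [hPeq] at hc
        exact hI ((Ideal.eq_top_iff_one I).mpr hc.1)
      · rw [hPeq, radical_prod] at hc
        exact hJ (Ideal.radical_eq_top.mp ((Ideal.eq_top_iff_one _).mpr hc.2))

theorem isPrimary_comap (f : A →+* B) {J : Ideal B} (hJ : J.IsPrimary) :
    (J.comap f).IsPrimary := by
  rw [Ideal.isPrimary_iff] at hJ ⊢
  constructor
  · intro h
    exact hJ.1 ((Ideal.eq_top_iff_one J).mpr (by simpa using (Ideal.eq_top_iff_one _).mp h))
  · intro x y hxy
    rcases hJ.2 (show f x * f y ∈ J by rw [← _root_.map_mul]; exact hxy) with hc | hc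
    · exact Or.inl hc
    · right; rw [← Ideal.comap_radical]; exact hc

theorem PP_equiv (e : A ≃+* B) (h : PP A) : PP B := by
  intro q hirr
  set c : Ideal B → Ideal A := fun J => J.comap (e : A →+* B) with hcdef
  set c' : Ideal A → Ideal B := fun I => I.comap (e.symm : B →+* A) with hc'def
  have hcc' : ∀ I : Ideal A, c (c' I) = I := by
    intro I; ext x
    simp only [hcdef, hc'def, Ideal.mem_comap, RingEquiv.coe_toRingHom,
      RingEquiv.symm_apply_apply, RingEquiv.apply_symm_apply]
  have hc'c : ∀ J : Ideal B, c' (c J) = J := by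
    intro J; ext x
    simp only [hcdef, hc'def, Ideal.mem_comap, RingEquiv.coe_toRingHom,
      RingEquiv.symm_apply_apply, RingEquiv.apply_symm_apply]
  have hcmono : ∀ {J J' : Ideal B}, J ≤ J' → c J ≤ c J' := fun h => Ideal.comap_mono h
  have hc'mono : ∀ {I I' : Ideal A}, I ≤ I' → c' I ≤ c' I' := fun h => Ideal.comap_mono h
  have hprimc : ∀ {J : Ideal B}, J.IsPrimary → (c J).IsPrimary := fun h => isPrimary_comap _ h
  have hprimc' : ∀ {I : Ideal A}, I.IsPrimary → (c' I).IsPrimary := fun h => isPrimary_comap _ h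
  have hirr' : Irr (c q) := by
    constructor
    · obtain ⟨p, hp, hqp⟩ := hirr.1
      exact ⟨c p, hprimc hp, hcmono hqp⟩
    · intro s hs
      classical
      have hs' : ∀ p : Ideal B, p.IsPrimary → q ≤ p → ∃ a' ∈ s.image c', a' ≤ p := by
        intro p hp hqp
        obtain ⟨a, ha, hale⟩ := hs (c p) (hprimc hp) (hcmono hqp)
        refine ⟨c' a, Finset.mem_image_of_mem _ ha, ?_⟩
        have := hc'mono hale
        rwa [hc'c] at this
      obtain ⟨a', ha', hcov⟩ := hirr.2 _ hs'
      obtain ⟨a, ha, rfl⟩ := Finset.mem_image.mp ha'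
      refine ⟨a, ha, fun p hp hcqp => ?_⟩
      have hq : q ≤ c' p := by
        have := hc'mono hcqp
        rwa [hc'c] at this
      have := hcmono (hcov (c' p) (hprimc' hp) hq)
      rwa [hcc', hcc'] at this
  obtain ⟨p₀, hp₀, hle₀, hcov₀⟩ := h (c q) hirr'
  refine ⟨c' p₀, hprimc' hp₀, ?_, ?_⟩
  · have := hc'mono hle₀
    rwa [hc'c] at this
  · intro p hp hqp
    have := hc'mono (hcov₀ (c p) (hprimc hp) (hcmono hqp))
    rwa [hc'c] at this

theorem PP_prod_fst (hPP : PP (A × B)) : PP A := by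
  classical
  intro q hirr
  set Q : Ideal (A × B) := Ideal.prod q ⊤ with hQdef
  have hform : ∀ P : Ideal (A × B), P.IsPrimary → Q ≤ P →
      ∃ p : Ideal A, p.IsPrimary ∧ q ≤ p ∧ P = Ideal.prod p ⊤ := by
    intro P hP hQP
    rcases primary_prod_cases hP with ⟨p, hp, rfl⟩ | ⟨j, hj, rfl⟩
    · exact ⟨p, hp, (prod_le_prod_iff.mp hQP).1, rfl⟩
    · exfalso
      have : (⊤ : Ideal B) ≤ j := (prod_le_prod_iff.mp hQP).2
      exact (Ideal.isPrimary_iff.mp hj).1 (top_le_iff.mp this)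
  have hQirr : Irr Q := by
    constructor
    · obtain ⟨p, hp, hqp⟩ := hirr.1
      exact ⟨Ideal.prod p ⊤, isPrimary_prod_top.mpr hp,
        prod_le_prod_iff.mpr ⟨hqp, le_refl ⊤⟩⟩
    · intro s hs
      set s' := s.image (fun a => a.map (RingHom.fst A B)) with hs'def
      have hs'cov : ∀ p : Ideal A, p.IsPrimary → q ≤ p → ∃ a' ∈ s', a' ≤ p := by
        intro p hp hqp
        obtain ⟨a, ha, hale⟩ := hs (Ideal.prod p ⊤) (isPrimary_prod_top.mpr hp)
          (prod_le_prod_iff.mpr ⟨hqp, le_refl ⊤⟩)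
        refine ⟨a.map (RingHom.fst A B), Finset.mem_image_of_mem _ ha, ?_⟩
        rw [Ideal.map_le_iff_le_comap, comap_fst_eq]
        exact hale
      obtain ⟨a', ha', hcov⟩ := hirr.2 s' hs'cov
      obtain ⟨a, ha, rfl⟩ := Finset.mem_image.mp ha'
      refine ⟨a, ha, fun P hP hQP => ?_⟩
      obtain ⟨p, hp, hqp, rfl⟩ := hform P hP hQP
      rw [← comap_fst_eq, ← Ideal.map_le_iff_le_comap]
      exact hcov p hp hqp
  obtain ⟨P₀, hP₀, hQP₀, hcovP₀⟩ := hPP Q hQirr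
  obtain ⟨p₀, hp₀, hqp₀, rfl⟩ := hform P₀ hP₀ hQP₀
  refine ⟨p₀, hp₀, hqp₀, fun p hp hqp => ?_⟩
  have := hcovP₀ (Ideal.prod p ⊤) (isPrimary_prod_top.mpr hp)
    (prod_le_prod_iff.mpr ⟨hqp, le_refl ⊤⟩)
  exact (prod_le_prod_iff.mp this).1

theorem PP_prod_snd (hPP : PP (A × B)) : PP B :=
  PP_prod_fst (PP_equiv (RingEquiv.prodComm (R := A) (S := B)) hPP)

theorem PP_prod (hA : PP A) (hB : PP B) : PP (A × B) := by
  classical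
  intro Q hirr
  have hQeq := Ideal.ideal_prod_eq Q
  set q₁ := Q.map (RingHom.fst A B) with hq₁def
  set q₂ := Q.map (RingHom.snd A B) with hq₂def
  -- not both proper
  have hcases : q₁ = ⊤ ∨ q₂ = ⊤ := by
    by_contra hcon
    push_neg at hcon
    obtain ⟨h₁, h₂⟩ := hcon
    obtain ⟨m₁, hm₁max, hm₁⟩ := Ideal.exists_le_maximal q₁ h₁
    obtain ⟨m₂, hm₂max, hm₂⟩ := Ideal.exists_le_maximal q₂ h₂
    have hcov : ∀ P : Ideal (A × B), P.IsPrimary → Q ≤ P →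
        ∃ a ∈ ({Ideal.prod (⊥ : Ideal A) ⊤, Ideal.prod (⊤ : Ideal A) (⊥ : Ideal B)} :
          Finset (Ideal (A × B))), a ≤ P := by
      intro P hP hQP
      rcases primary_prod_cases hP with ⟨p, hp, rfl⟩ | ⟨j, hj, rfl⟩
      · exact ⟨Ideal.prod ⊥ ⊤, by simp, prod_le_prod_iff.mpr ⟨bot_le, le_refl _⟩⟩
      · exact ⟨Ideal.prod ⊤ ⊥, by simp, prod_le_prod_iff.mpr ⟨le_refl _, bot_le⟩⟩
    obtain ⟨a, haS, hacov⟩ := hirr.2 _ hcov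
    have hQ₁ : Q ≤ Ideal.prod ⊤ m₂ := by
      rw [hQeq]; exact prod_le_prod_iff.mpr ⟨le_top, hm₂⟩
    have hQ₂ : Q ≤ Ideal.prod m₁ ⊤ := by
      rw [hQeq]; exact prod_le_prod_iff.mpr ⟨hm₁, le_top⟩
    rcases Finset.mem_insert.mp haS with rfl | haS'
    · have := hacov (Ideal.prod ⊤ m₂) (isPrimary_top_prod.mpr hm₂max.isPrime.isPrimary) hQ₁
      exact hm₂max.ne_top (top_le_iff.mp (prod_le_prod_iff.mp this).2)
    · rw [Finset.mem_singleton.mp haS'] at hacov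
      have := hacov (Ideal.prod m₁ ⊤) (isPrimary_prod_top.mpr hm₁max.isPrime.isPrimary) hQ₂
      exact hm₁max.ne_top (top_le_iff.mp (prod_le_prod_iff.mp this).1)
  rcases hcases with hq₁top | hq₂top
  · -- Q = ⊤ × q₂ : reduce to B
    have hQ : Q = Ideal.prod ⊤ q₂ := by rw [hQeq, hq₁top]
    have hform : ∀ P : Ideal (A × B), P.IsPrimary → Q ≤ P →
        ∃ j : Ideal B, j.IsPrimary ∧ q₂ ≤ j ∧ P = Ideal.prod ⊤ j := by
      intro P hP hQP
      rw [hQ] at hQP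
      rcases primary_prod_cases hP with ⟨p, hp, rfl⟩ | ⟨j, hj, rfl⟩
      · exact absurd (top_le_iff.mp (prod_le_prod_iff.mp hQP).1)
          (Ideal.isPrimary_iff.mp hp).1
      · exact ⟨j, hj, (prod_le_prod_iff.mp hQP).2, rfl⟩
    have hirrB : Irr q₂ := by
      constructor
      · obtain ⟨P, hP, hQP⟩ := hirr.1
        obtain ⟨j, hj, hq₂j, rfl⟩ := hform P hP hQP
        exact ⟨j, hj, hq₂j⟩
      · intro s hs
        set s' := s.image (fun j => Ideal.prod (⊤ : Ideal A) j) with hs'def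
        have hscov : ∀ P : Ideal (A × B), P.IsPrimary → Q ≤ P → ∃ a ∈ s', a ≤ P := by
          intro P hP hQP
          obtain ⟨j, hj, hq₂j, rfl⟩ := hform P hP hQP
          obtain ⟨b, hb, hble⟩ := hs j hj hq₂j
          exact ⟨Ideal.prod ⊤ b, Finset.mem_image_of_mem _ hb,
            prod_le_prod_iff.mpr ⟨le_refl _, hble⟩⟩
        obtain ⟨a', ha', hcov⟩ := hirr.2 s' hscov
        obtain ⟨b, hb, rfl⟩ := Finset.mem_image.mp ha'
        refine ⟨b, hb, fun j hj hq₂j => ?_⟩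
        have := hcov (Ideal.prod ⊤ j) (isPrimary_top_prod.mpr hj)
          (by rw [hQ]; exact prod_le_prod_iff.mpr ⟨le_refl _, hq₂j⟩)
        exact (prod_le_prod_iff.mp this).2
    obtain ⟨j₀, hj₀, hq₂j₀, hcovj₀⟩ := hB q₂ hirrB
    refine ⟨Ideal.prod ⊤ j₀, isPrimary_top_prod.mpr hj₀,
      by rw [hQ]; exact prod_le_prod_iff.mpr ⟨le_refl _, hq₂j₀⟩, ?_⟩
    intro P hP hQP
    obtain ⟨j, hj, hq₂j, rfl⟩ := hform P hP hQP
    exact prod_le_prod_iff.mpr ⟨le_refl _, hcovj₀ j hj hq₂j⟩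
  · -- Q = q₁ × ⊤ : reduce to A
    have hQ : Q = Ideal.prod q₁ ⊤ := by rw [hQeq, hq₂top]
    have hform : ∀ P : Ideal (A × B), P.IsPrimary → Q ≤ P →
        ∃ p : Ideal A, p.IsPrimary ∧ q₁ ≤ p ∧ P = Ideal.prod p ⊤ := by
      intro P hP hQP
      rw [hQ] at hQP
      rcases primary_prod_cases hP with ⟨p, hp, rfl⟩ | ⟨j, hj, rfl⟩
      · exact ⟨p, hp, (prod_le_prod_iff.mp hQP).1, rfl⟩
      · exact absurd (top_le_iff.mp (prod_le_prod_iff.mp hQP).2)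
          (Ideal.isPrimary_iff.mp hj).1
    have hirrA : Irr q₁ := by
      constructor
      · obtain ⟨P, hP, hQP⟩ := hirr.1
        obtain ⟨p, hp, hq₁p, rfl⟩ := hform P hP hQP
        exact ⟨p, hp, hq₁p⟩
      · intro s hs
        set s' := s.image (fun p => Ideal.prod p (⊤ : Ideal B)) with hs'def
        have hscov : ∀ P : Ideal (A × B), P.IsPrimary → Q ≤ P → ∃ a ∈ s', a ≤ P := by
          intro P hP hQP
          obtain ⟨p, hp, hq₁p, rfl⟩ := hform P hP hQP
          obtain ⟨b, hb, hble⟩ := hs p hp hq₁p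
          exact ⟨Ideal.prod b ⊤, Finset.mem_image_of_mem _ hb,
            prod_le_prod_iff.mpr ⟨hble, le_refl _⟩⟩
        obtain ⟨a', ha', hcov⟩ := hirr.2 s' hscov
        obtain ⟨b, hb, rfl⟩ := Finset.mem_image.mp ha'
        refine ⟨b, hb, fun p hp hq₁p => ?_⟩
        have := hcov (Ideal.prod p ⊤) (isPrimary_prod_top.mpr hp)
          (by rw [hQ]; exact prod_le_prod_iff.mpr ⟨hq₁p, le_refl _⟩)
        exact (prod_le_prod_iff.mp this).1
    obtain ⟨p₀, hp₀, hq₁p₀, hcovp₀⟩ := hA q₁ hirrA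
    refine ⟨Ideal.prod p₀ ⊤, isPrimary_prod_top.mpr hp₀,
      by rw [hQ]; exact prod_le_prod_iff.mpr ⟨hq₁p₀, le_refl _⟩, ?_⟩
    intro P hP hQP
    obtain ⟨p, hp, hq₁p, rfl⟩ := hform P hP hQP
    exact prod_le_prod_iff.mpr ⟨hcovp₀ p hp hq₁p, le_refl _⟩

end Prod

universe u

/-- A "good" factor: zero-dimensional or a one-dimensional domain. -/
def Good (A : Type u) [CommRing A] : Prop :=
  (∀ p : Ideal A, p.IsPrime → p.IsMaximal) ∨ (IsDomain A ∧ ringKrullDim A = 1)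

/-- The right-hand side of the main theorem. -/
def RHS (R : Type u) [CommRing R] : Prop :=
  ∃ (n : ℕ) (Rs : Fin n → Type u) (_ : ∀ i, CommRing (Rs i)),
    (∀ i, Good (Rs i)) ∧ Nonempty (R ≃+* ((i : Fin n) → Rs i))

/-- `R` is isomorphic to the product ring over `Fin 1`. -/
def constPiFinOne (R : Type u) [CommRing R] : R ≃+* ((_ : Fin 1) → R) where
  toFun a := fun _ => a
  invFun f := f 0
  left_inv a := rfl
  right_inv f := funext fun i => congrArg f (Subsingleton.elim 0 i)
  map_mul' _ _ := rfl
  map_add' _ _ := rfl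

/-- Splitting off the first factor of a finite product of rings. -/
def piSuccRingEquiv {n : ℕ} (π : Fin (n + 1) → Type u) [∀ i, CommRing (π i)] :
    ((i : Fin (n + 1)) → π i) ≃+* (π 0 × ((i : Fin n) → π i.succ)) where
  toFun f := (f 0, fun i => f i.succ)
  invFun p := Fin.cons p.1 p.2
  left_inv f := by
    funext i
    refine Fin.cases ?_ ?_ i
    · simp
    · intro j; simp
  right_inv p := by
    obtain ⟨a, g⟩ := p
    simp
  map_mul' _ _ := rfl
  map_add' _ _ := rfl

/-- A product of two finite products of rings, as a single product over a sum type. -/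
def prodPiSumRingEquiv {ι ι' : Type*} (π : ι ⊕ ι' → Type u) [∀ s, CommRing (π s)] :
    (((i : ι) → π (.inl i)) × ((j : ι') → π (.inr j))) ≃+* ((s : ι ⊕ ι') → π s) where
  toFun p := fun s => Sum.rec (fun a => p.1 a) (fun b => p.2 b) s
  invFun f := (fun i => f (.inl i), fun j => f (.inr j))
  left_inv p := rfl
  right_inv f := by funext s; cases s <;> rfl
  map_mul' p q := by funext s; cases s <;> rfl
  map_add' p q := by funext s; cases s <;> rfl

theorem PP_of_subsingleton {A : Type*} [CommRing A] [Subsingleton A] : PP A := by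
  intro q hirr
  obtain ⟨p, hp, _⟩ := hirr.1
  exact absurd ((Ideal.eq_top_iff_one p).mpr
    (by rw [Subsingleton.elim (1 : A) 0]; exact p.zero_mem)) (Ideal.isPrimary_iff.mp hp).1

theorem PP_pi : ∀ (n : ℕ) (Rs : Fin n → Type u) (_ : ∀ i, CommRing (Rs i)),
    (∀ i, PP (Rs i)) → PP ((i : Fin n) → Rs i) := by
  intro n
  induction n with
  | zero =>
    intro Rs inst _
    haveI : Subsingleton ((i : Fin 0) → Rs i) := ⟨fun a b => funext fun i => i.elim0⟩
    exact PP_of_subsingleton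
  | succ n ih =>
    intro Rs inst hPP
    have h0 : PP (Rs 0 × ((i : Fin n) → Rs i.succ)) :=
      PP_prod (hPP 0) (ih (fun i => Rs i.succ) (fun i => inst i.succ) (fun i => hPP i.succ))
    exact PP_equiv (piSuccRingEquiv Rs).symm h0

theorem RHS_equiv {A B : Type u} [CommRing A] [CommRing B] (e : A ≃+* B) (h : RHS A) :
    RHS B := by
  obtain ⟨n, Rs, inst, hGood, ⟨eA⟩⟩ := h
  exact ⟨n, Rs, inst, hGood, ⟨e.symm.trans eA⟩⟩

theorem RHS_of_allMaximal (R : Type u) [CommRing R]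
    (h : ∀ p : Ideal R, p.IsPrime → p.IsMaximal) : RHS R :=
  ⟨1, fun _ => R, fun _ => inferInstance, fun _ => Or.inl h, ⟨constPiFinOne R⟩⟩

theorem RHS_prod {A B : Type u} [CommRing A] [CommRing B] (hA : RHS A) (hB : RHS B) :
    RHS (A × B) := by
  obtain ⟨n₁, As, instA, hGA, ⟨eA⟩⟩ := hA
  obtain ⟨n₂, Bs, instB, hGB, ⟨eB⟩⟩ := hB
  letI instS : ∀ s : Fin n₁ ⊕ Fin n₂, CommRing (Sum.elim As Bs s) := fun s =>
    Sum.rec (fun a => instA a) (fun b => instB b) s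
  refine ⟨n₁ + n₂, fun i => Sum.elim As Bs (finSumFinEquiv.symm i),
    fun i => instS _, fun i => ?_, ⟨?_⟩⟩
  · have hgoal : Good (Sum.elim As Bs (finSumFinEquiv.symm i)) := by
      rcases finSumFinEquiv.symm i with a | b
      · exact hGA a
      · exact hGB b
    exact hgoal
  · exact ((RingEquiv.prodCongr eA eB).trans (prodPiSumRingEquiv (Sum.elim As Bs))).trans
      (RingEquiv.piCongrLeft' (Sum.elim As Bs) finSumFinEquiv)

theorem PP_of_RHS {R : Type u} [CommRing R] [IsNoetherianRing R] (h : RHS R) : PP R := by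
  obtain ⟨n, Rs, inst, hGood, ⟨e⟩⟩ := h
  haveI hPiN : IsNoetherianRing ((i : Fin n) → Rs i) := isNoetherianRing_of_ringEquiv R e
  haveI hN : ∀ i, IsNoetherianRing (Rs i) := fun i =>
    isNoetherianRing_of_surjective _ _ (Pi.evalRingHom Rs i) (Function.surjective_eval i)
  have hPPi : ∀ i, PP (Rs i) := fun i => by
    rcases hGood i with h0 | ⟨hdom, hdim⟩
    · exact PP_of_allMaximal h0
    · haveI := hdom; exact PP_of_oneDimDomain hdim
  exact PP_equiv e.symm (PP_pi n Rs inst hPPi)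

theorem RHS_domain_case {R : Type u} [CommRing R] [IsNoetherianRing R] (hPP : PP R)
    (hnz : ∃ p : Ideal R, p.IsPrime ∧ ¬ p.IsMaximal)
    (huniq : ∀ p₁ ∈ minimalPrimes R, ∀ p₂ ∈ minimalPrimes R, p₁ = p₂) : RHS R := by
  obtain ⟨pn, hpn, hpnm⟩ := hnz
  have hmin := nonmax_prime_minimal hPP hpn hpnm
  have hbot : pn = ⊥ := unique_minimal_eq_bot hPP hmin (fun p hp => huniq p hp pn hmin)
    ⟨pn, hpn, hpnm⟩
  have hbp : (⊥ : Ideal R).IsPrime := hbot ▸ hpn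
  have hbnm : ¬ (⊥ : Ideal R).IsMaximal := hbot ▸ hpnm
  haveI hnt : Nontrivial R :=
    ⟨1, 0, fun h => hbp.ne_top ((Ideal.eq_top_iff_one ⊥).mpr (Ideal.mem_bot.mpr h))⟩
  haveI : NoZeroDivisors R := ⟨fun {a b} hab => by
    rcases hbp.mem_or_mem (Ideal.mem_bot.mpr hab) with h | h
    · exact Or.inl (Ideal.mem_bot.mp h)
    · exact Or.inr (Ideal.mem_bot.mp h)⟩
  haveI hdom : IsDomain R := NoZeroDivisors.to_isDomain R
  have hnm_bot : ∀ p : Ideal R, p.IsPrime → ¬ p.IsMaximal → p = ⊥ := by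
    intro p hp hnm
    have hm := nonmax_prime_minimal hPP hp hnm
    exact (huniq p hm pn hmin).trans hbot
  obtain ⟨m, hmmax⟩ := Ideal.exists_maximal R
  have hmbot : (⊥ : Ideal R) < m := bot_lt_iff_ne_bot.mpr (fun h => hbnm (h ▸ hmmax))
  let x0 : PrimeSpectrum R := ⟨⊥, hbp⟩
  let xm : PrimeSpectrum R := ⟨m, hmmax.isPrime⟩
  have hx0m : x0 < xm := (PrimeSpectrum.asIdeal_lt_asIdeal x0 xm).mp hmbot
  let l₁ : LTSeries (PrimeSpectrum R) := (RelSeries.singleton _ x0).snoc xm hx0m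
  have hone : (⨆ l : LTSeries (PrimeSpectrum R), (l.length : ℕ∞)) = 1 := by
    apply le_antisymm
    · apply iSup_le
      intro l
      have hlen : l.length ≤ 1 := by
        by_contra hl
        push_neg at hl
        have h2 : 2 ≤ l.length := hl
        have h01 : l.toFun ⟨0, by omega⟩ < l.toFun ⟨1, by omega⟩ :=
          l.strictMono (by rw [Fin.lt_def]; norm_num)
        have h12 : l.toFun ⟨1, by omega⟩ < l.toFun ⟨2, by omega⟩ :=
          l.strictMono (by rw [Fin.lt_def]; norm_num)
        set x1 := l.toFun ⟨1, by omega⟩ with hx1def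
        set x2 := l.toFun ⟨2, by omega⟩ with hx2def
        have hx1nm : ¬ x1.asIdeal.IsMaximal := by
          intro hmax
          have hlt : x1.asIdeal < x2.asIdeal := (PrimeSpectrum.asIdeal_lt_asIdeal _ _).mpr h12
          exact hlt.ne (hmax.eq_of_le x2.isPrime.ne_top hlt.le)
        have hx1b : x1.asIdeal = ⊥ := hnm_bot _ x1.isPrime hx1nm
        have hlt01 : (l.toFun ⟨0, by omega⟩).asIdeal < x1.asIdeal :=
          (PrimeSpectrum.asIdeal_lt_asIdeal _ _).mpr h01
        rw [hx1b] at hlt01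
        exact not_lt_bot hlt01
      exact_mod_cast hlen
    · refine le_trans ?_ (le_iSup (fun l : LTSeries (PrimeSpectrum R) => (l.length : ℕ∞)) l₁)
      norm_num [l₁]
      exact le_rfl
  have hdim : ringKrullDim R = 1 := by
    have h1 : ringKrullDim R = Order.krullDim (PrimeSpectrum R) := rfl
    rw [h1, Order.krullDim_eq_iSup_length, hone]
    rfl
  exact ⟨1, fun _ => R, fun _ => inferInstance, fun _ => Or.inr ⟨hdom, hdim⟩,
    ⟨constPiFinOne R⟩⟩

theorem RHS_of_PP : ∀ (N : ℕ) (R : Type u) [CommRing R] [IsNoetherianRing R],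
    (minimalPrimes R).ncard ≤ N + 1 → PP R → RHS R := by
  intro N
  induction N with
  | zero =>
    intro R _ _ hcard hPP
    by_cases hall : ∀ p : Ideal R, p.IsPrime → p.IsMaximal
    · exact RHS_of_allMaximal R hall
    · push_neg at hall
      refine RHS_domain_case hPP hall ?_
      intro q₁ hq₁ q₂ hq₂
      by_contra hne
      have h2 : 1 < (minimalPrimes R).ncard :=
        (Set.one_lt_ncard (minimalPrimes.finite_of_isNoetherianRing R)).mpr
          ⟨q₁, hq₁, q₂, hq₂, hne⟩
      omega
  | succ N ih =>
    intro R _ _ hcard hPP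
    by_cases hall : ∀ p : Ideal R, p.IsPrime → p.IsMaximal
    · exact RHS_of_allMaximal R hall
    push_neg at hall
    by_cases huniq : ∀ p₁ ∈ minimalPrimes R, ∀ p₂ ∈ minimalPrimes R, p₁ = p₂
    · exact RHS_domain_case hPP hall huniq
    push_neg at huniq
    obtain ⟨p₁, hp₁, p₂, hp₂, hne⟩ := huniq
    classical
    have hp₁p : p₁.IsPrime := hp₁.1.1
    have hfinR : (minimalPrimes R).Finite := minimalPrimes.finite_of_isNoetherianRing R
    set Jset : Set (Ideal R) := minimalPrimes R \ {p₁} with hJsetdef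
    have hJfin : Jset.Finite := hfinR.subset Set.diff_subset
    set I : Ideal R := p₁ with hIdef
    set J : Ideal R := sInf Jset with hJdef
    have hp₂mem : p₂ ∈ Jset := ⟨hp₂, fun h => hne (Set.mem_singleton_iff.mp h).symm⟩
    -- any prime containing J contains some member of Jset
    have hJprime : ∀ m : Ideal R, m.IsPrime → J ≤ m → ∃ p' ∈ Jset, p' ≤ m := by
      intro m hm hJm
      have hinf : (hJfin.toFinset).inf id ≤ m := by
        rw [Finset.inf_id_eq_sInf, hJfin.coe_toFinset]
        exact hJm
      obtain ⟨p', hp'mem, hp'le⟩ := (hm.inf_le').mp hinf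
      exact ⟨p', hJfin.mem_toFinset.mp hp'mem, hp'le⟩
    have hIJ : I ⊔ J = ⊤ := by
      by_contra hne'
      obtain ⟨m, hmmax, hm⟩ := Ideal.exists_le_maximal _ hne'
      obtain ⟨p', hp'Jset, hp'le⟩ := hJprime m hmmax.isPrime (le_sup_right.trans hm)
      have heq : p' = p₁ := minimal_eq_of_le_maximal hPP hp'Jset.1 hp₁ hmmax hp'le
        (le_sup_left.trans hm)
      exact hp'Jset.2 (by simp [heq])
    obtain ⟨t, ht⟩ : IsNilpotent (nilradical R) := IsNoetherianRing.isNilpotent_nilradical R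
    have ht0 : t ≠ 0 := by
      rintro rfl
      rw [pow_zero] at ht
      have htop : (⊤ : Ideal R) = ⊥ := by simpa using ht
      exact hp₁p.ne_top (le_antisymm le_top (htop ▸ bot_le))
    have hinsert : minimalPrimes R = insert p₁ Jset := by
      rw [hJsetdef, Set.insert_diff_singleton, Set.insert_eq_self.mpr hp₁]
    have hinf : I ⊓ J = nilradical R := by
      have h1 : I ⊓ J = sInf (insert p₁ Jset) := by rw [sInf_insert]
      rw [h1, ← hinsert]
      have h2 : sInf (minimalPrimes R) = (⊥ : Ideal R).radical := Ideal.sInf_minimalPrimes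
      rw [h2]
      rfl
    have hcop : IsCoprime I J := (Ideal.isCoprime_iff_sup_eq).mpr hIJ
    have hcopt : IsCoprime (I ^ t) (J ^ t) := hcop.pow
    have h3 : (I * J) ^ t = ⊥ := by
      have hle : (I * J) ^ t ≤ (nilradical R) ^ t :=
        Ideal.pow_right_mono (Ideal.mul_le_inf.trans hinf.le) t
      rw [ht] at hle
      simpa using le_bot_iff.mp (by simpa using hle)
    have hbot' : I ^ t ⊓ J ^ t = ⊥ := by
      rw [← Ideal.mul_eq_inf_of_coprime (Ideal.isCoprime_iff_sup_eq.mp hcopt), ← mul_pow]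
      exact h3
    let e : R ≃+* (R ⧸ I ^ t) × (R ⧸ J ^ t) :=
      ((RingEquiv.quotientBot R).symm.trans (Ideal.quotEquivOfEq hbot'.symm)).trans
        (Ideal.quotientInfEquivQuotientProd _ _ hcopt)
    have hPPprod : PP ((R ⧸ I ^ t) × (R ⧸ J ^ t)) := PP_equiv e hPP
    have hPPA : PP (R ⧸ I ^ t) := PP_prod_fst hPPprod
    have hPPB : PP (R ⧸ J ^ t) := PP_prod_snd hPPprod
    have hcardquot : ∀ K : Ideal R, (minimalPrimes (R ⧸ K)).ncard = (K.minimalPrimes).ncard := by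
      intro K
      rw [Ideal.minimalPrimes_eq_comap]
      exact (Set.ncard_image_of_injective _
        (Ideal.comap_injective_of_surjective _ Ideal.Quotient.mk_surjective)).symm
    have hminI : (I ^ t).minimalPrimes = {p₁} := by
      ext p
      constructor
      · intro hp
        have hpprime : p.IsPrime := hp.1.1
        have hp₁le : p₁ ≤ p := by
          intro x hx
          exact hpprime.mem_of_pow_mem t (hp.1.2 (Ideal.pow_mem_pow hx t))
        have hple : p ≤ p₁ := hp.2 ⟨hp₁p, Ideal.pow_le_self ht0⟩ hp₁le
        simp [le_antisymm hple hp₁le]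
      · rintro rfl
        refine ⟨⟨hp₁p, Ideal.pow_le_self ht0⟩, ?_⟩
        intro y hy hyle
        intro x hx
        exact hy.1.mem_of_pow_mem t (hy.2 (Ideal.pow_mem_pow hx t))
    have hminJ : (J ^ t).minimalPrimes = Jset := by
      ext p
      constructor
      · intro hp
        have hpp : p.IsPrime := hp.1.1
        have hJp : J ≤ p := fun x hx => hpp.mem_of_pow_mem t (hp.1.2 (Ideal.pow_mem_pow hx t))
        obtain ⟨p', hp'J, hp'p⟩ := hJprime p hpp hJp
        have hpe : p ≤ p' := hp.2 ⟨hp'J.1.1.1, (Ideal.pow_le_self ht0).trans (sInf_le hp'J)⟩ hp'p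
        rw [le_antisymm hpe hp'p]
        exact hp'J
      · intro hpJ
        refine ⟨⟨hpJ.1.1.1, (Ideal.pow_le_self ht0).trans (sInf_le hpJ)⟩, ?_⟩
        intro y hy hyp
        have hJy : J ≤ y := fun x hx => hy.1.mem_of_pow_mem t (hy.2 (Ideal.pow_mem_pow hx t))
        obtain ⟨p'', hp''J, hp''y⟩ := hJprime y hy.1 hJy
        have hp''p : p'' ≤ p := hp''y.trans hyp
        have heq : p'' = p := le_antisymm hp''p (hpJ.1.2 ⟨hp''J.1.1.1, bot_le⟩ hp''p)
        exact heq ▸ hp''y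
    have h2card : 1 < (minimalPrimes R).ncard :=
      (Set.one_lt_ncard hfinR).mpr ⟨p₁, hp₁, p₂, hp₂, hne⟩
    have hcardI : (minimalPrimes (R ⧸ I ^ t)).ncard ≤ N + 1 := by
      rw [hcardquot, hminI, Set.ncard_singleton]
      omega
    have hcardJ : (minimalPrimes (R ⧸ J ^ t)).ncard ≤ N + 1 := by
      rw [hcardquot, hminJ, hJsetdef, Set.ncard_diff_singleton_of_mem hp₁]
      omega
    have hA : RHS (R ⧸ I ^ t) := ih (R ⧸ I ^ t) hcardI hPPA
    have hB : RHS (R ⧸ J ^ t) := ih (R ⧸ J ^ t) hcardJ hPPB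
    exact RHS_equiv e.symm (RHS_prod hA hB)

section Topology

variable {R : Type*} [CommRing R]

theorem basic_open_structure {U : Set (Ideal R)} (hU : @IsOpen (Ideal R) (coarseLowerTopology R) U)
    {x : Ideal R} (hx : x ∈ U) :
    ∃ s : Finset (Ideal R), (∀ a ∈ s, ¬ a ≤ x) ∧
      ∀ y : Ideal R, (∀ a ∈ s, ¬ a ≤ y) → y ∈ U := by
  classical
  letI := coarseLowerTopology R
  have hb := TopologicalSpace.isTopologicalBasis_of_subbasis
    (t := coarseLowerTopology R) (s := {U : Set (Ideal R) | ∃ a : Ideal R, U = {i : Ideal R | a ≤ i}ᶜ}) rfl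
  obtain ⟨v, hvB, hxv, hvU⟩ := hb.exists_subset_of_mem_open hx hU
  obtain ⟨f, ⟨hfin, hsub⟩, rfl⟩ := hvB
  set A : Set (Ideal R) := {a : Ideal R | {i : Ideal R | a ≤ i}ᶜ ∈ f} with hAdef
  have hinj : Set.InjOn (fun a : Ideal R => {i : Ideal R | a ≤ i}ᶜ) A := by
    intro a _ b _ h
    have h' : {i : Ideal R | a ≤ i} = {i : Ideal R | b ≤ i} := compl_injective h
    have hba : b ≤ a := by
      have : a ∈ {i : Ideal R | b ≤ i} := h' ▸ (le_refl a : a ∈ {i : Ideal R | a ≤ i})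
      exact this
    have hab : a ≤ b := by
      have : b ∈ {i : Ideal R | a ≤ i} := h'.symm ▸ (le_refl b : b ∈ {i : Ideal R | b ≤ i})
      exact this
    exact le_antisymm hab hba
  have himg : (fun a : Ideal R => {i : Ideal R | a ≤ i}ᶜ) '' A ⊆ f := by
    rintro w ⟨a, ha, rfl⟩
    exact ha
  have hAfin : A.Finite := Set.Finite.of_finite_image (hfin.subset himg) hinj
  refine ⟨hAfin.toFinset, ?_, ?_⟩
  · intro a ha
    have haA : a ∈ A := hAfin.mem_toFinset.mp ha
    exact Set.mem_sInter.mp hxv _ haA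
  · intro y hy
    apply hvU
    rw [Set.mem_sInter]
    intro w hw
    obtain ⟨a, rfl⟩ := hsub hw
    exact hy a (hAfin.mem_toFinset.mpr hw)

theorem isClosed_upset (a : Ideal R) :
    @IsClosed (Ideal R) (coarseLowerTopology R) {i : Ideal R | a ≤ i} := by
  letI := coarseLowerTopology R
  rw [← isOpen_compl_iff]
  exact TopologicalSpace.GenerateOpen.basic _ ⟨a, rfl⟩

theorem irr_subset_of_finite_closed_cover {X : Type*} [TopologicalSpace X] {S : Set X}
    (hS : IsIrreducible S) {ι : Type*} (s : Finset ι) (f : ι → Set X)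
    (hf : ∀ i ∈ s, IsClosed (f i)) (hcov : S ⊆ ⋃ i ∈ s, f i) : ∃ i ∈ s, S ⊆ f i := by
  classical
  induction s using Finset.induction_on with
  | empty =>
    obtain ⟨x, hx⟩ := hS.1
    simpa using hcov hx
  | @insert a s ha ih =>
    by_cases hfa : S ⊆ f a
    · exact ⟨a, Finset.mem_insert_self _ _, hfa⟩
    · by_cases hrest : S ⊆ ⋃ i ∈ s, f i
      · obtain ⟨i, hi, hSi⟩ := ih (fun i hi => hf i (Finset.mem_insert_of_mem hi)) hrest
        exact ⟨i, Finset.mem_insert_of_mem hi, hSi⟩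
      · exfalso
        obtain ⟨x, hxS, hxa⟩ := Set.not_subset.mp hfa
        obtain ⟨y, hyS, hyr⟩ := Set.not_subset.mp hrest
        have hclosed : IsClosed (⋃ i ∈ s, f i) :=
          Set.Finite.isClosed_biUnion s.finite_toSet
            (fun i hi => hf i (Finset.mem_insert_of_mem hi))
        obtain ⟨z, hzS, hz1, hz2⟩ := hS.2 (f a)ᶜ (⋃ i ∈ s, f i)ᶜ
          (hf a (Finset.mem_insert_self _ _)).isOpen_compl hclosed.isOpen_compl
          ⟨x, hxS, hxa⟩ ⟨y, hyS, hyr⟩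
        rcases Set.mem_iUnion₂.mp (hcov hzS) with ⟨i, hi, hzi⟩
        rcases Finset.mem_insert.mp hi with rfl | hi'
        · exact hz1 hzi
        · exact hz2 (Set.mem_biUnion hi' hzi)

theorem quasiSober_iff_PP (R : Type*) [CommRing R] :
    (letI := coarseLowerTopology R
     QuasiSober {a : Ideal R | a.IsPrimary}) ↔ PP R := by
  letI := coarseLowerTopology R
  show QuasiSober {a : Ideal R | a.IsPrimary} ↔ PP R
  classical
  constructor
  · intro hQS q hirr
    obtain ⟨p1, hp1, hqp1⟩ := hirr.1
    set C : Set {a : Ideal R | a.IsPrimary} := {p | q ≤ (p : Ideal R)} with hCdef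
    have hCclosed : IsClosed C :=
      (isClosed_upset q).preimage continuous_subtype_val
    have hCne : C.Nonempty := ⟨⟨p1, hp1⟩, hqp1⟩
    have hCpre : IsPreirreducible C := by
      rintro U V hU hV ⟨x, hxC, hxU⟩ ⟨y, hyC, hyU⟩
      obtain ⟨U', hU', hUeq⟩ := isOpen_induced_iff.mp hU
      obtain ⟨V', hV', hVeq⟩ := isOpen_induced_iff.mp hV
      obtain ⟨sU, hsUx, hsU⟩ := basic_open_structure hU'
        (show (x : Ideal R) ∈ U' from by rw [← hUeq] at hxU; exact hxU)
      obtain ⟨sV, hsVy, hsV⟩ := basic_open_structure hV'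
        (show (y : Ideal R) ∈ V' from by rw [← hVeq] at hyU; exact hyU)
      by_contra hemp
      rw [Set.not_nonempty_iff_eq_empty] at hemp
      have hcov : ∀ p : Ideal R, p.IsPrimary → q ≤ p → ∃ a ∈ sU ∪ sV, a ≤ p := by
        intro p hp hqp
        by_contra hno
        push_neg at hno
        have hpU : (⟨p, hp⟩ : {a : Ideal R | a.IsPrimary}) ∈ U := by
          rw [← hUeq]
          exact hsU p (fun a ha => hno a (Finset.mem_union_left _ ha))
        have hpV : (⟨p, hp⟩ : {a : Ideal R | a.IsPrimary}) ∈ V := by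
          rw [← hVeq]
          exact hsV p (fun a ha => hno a (Finset.mem_union_right _ ha))
        have hmem : (⟨p, hp⟩ : {a : Ideal R | a.IsPrimary}) ∈ C ∩ (U ∩ V) :=
          ⟨hqp, hpU, hpV⟩
        rw [hemp] at hmem
        exact hmem
      obtain ⟨a, haUV, hacov⟩ := hirr.2 _ hcov
      rcases Finset.mem_union.mp haUV with ha | ha
      · exact hsUx a ha (hacov x.1 x.2 hxC)
      · exact hsVy a ha (hacov y.1 y.2 hyC)
    obtain ⟨z, hz⟩ := hQS.sober ⟨hCne, hCpre⟩ hCclosed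
    have hzC : z ∈ C := hz.mem
    refine ⟨z.1, z.2, hzC, ?_⟩
    intro p hp hqp
    have hD : IsClosed {w : {a : Ideal R | a.IsPrimary} | z.1 ≤ (w : Ideal R)} :=
      (isClosed_upset z.1).preimage continuous_subtype_val
    have hsubC : C ⊆ {w : {a : Ideal R | a.IsPrimary} | z.1 ≤ (w : Ideal R)} := by
      rw [← hz]
      refine closure_minimal ?_ hD
      intro w hw
      rw [Set.mem_singleton_iff.mp hw]
      exact show (z : Ideal R) ≤ (z : Ideal R) from le_refl _
    have hmemC : (⟨p, hp⟩ : {a : Ideal R | a.IsPrimary}) ∈ C := hqp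
    exact hsubC hmemC
  · intro hPP
    refine ⟨?_⟩
    intro S hSirr hSclosed
    set q : Ideal R := sInf (Subtype.val '' S) with hqdef
    have hqle : ∀ p ∈ S, q ≤ (p : Ideal R) := fun p hp => sInf_le ⟨p, hp, rfl⟩
    have hpieces : ∀ s : Finset (Ideal R), (∀ p ∈ S, ∃ a ∈ s, a ≤ (p : Ideal R)) →
        ∃ a ∈ s, ∀ p ∈ S, a ≤ (p : Ideal R) := by
      intro s hcov
      have hres := irr_subset_of_finite_closed_cover hSirr s
        (fun a => {w : {a : Ideal R | a.IsPrimary} | a ≤ (w : Ideal R)})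
        (fun a _ => (isClosed_upset a).preimage continuous_subtype_val)
        (by
          intro w hw
          rw [Set.mem_iUnion₂]
          obtain ⟨a, ha, hle⟩ := hcov w hw
          exact ⟨a, ha, hle⟩)
      obtain ⟨a, ha, hSa⟩ := hres
      exact ⟨a, ha, fun p hp => hSa hp⟩
    have hirr : Irr q := by
      refine ⟨?_, ?_⟩
      · obtain ⟨x, hxS⟩ := hSirr.1
        exact ⟨x.1, x.2, hqle x hxS⟩
      · intro s hs
        obtain ⟨a, ha, hSa⟩ := hpieces s (fun p hp => hs p.1 p.2 (hqle p hp))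
        refine ⟨a, ha, fun p hp hqp => ?_⟩
        have haq : a ≤ q := le_sInf (by rintro _ ⟨w, hwS, rfl⟩; exact hSa w hwS)
        exact haq.trans hqp
    obtain ⟨p₀, hp₀, hqp₀, hcov₀⟩ := hPP q hirr
    have hz0 : (⟨p₀, hp₀⟩ : {a : Ideal R | a.IsPrimary}) ∈ S := by
      by_contra hzn
      obtain ⟨D, hD, hDeq⟩ := isClosed_induced_iff.mp hSclosed
      have hp₀D : p₀ ∉ D := fun h => hzn (by rw [← hDeq]; exact h)
      obtain ⟨s, hsx, hsprop⟩ := basic_open_structure hD.isOpen_compl hp₀D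
      obtain ⟨a, ha, hSa⟩ := hpieces s (by
        intro p hp
        by_contra hno
        push_neg at hno
        have hpD : (p : Ideal R) ∈ Dᶜ := hsprop p.1 hno
        exact hpD (by rw [← Set.mem_preimage, hDeq]; exact hp))
      exact hsx a ha ((le_sInf (by rintro _ ⟨w, hwS, rfl⟩; exact hSa w hwS)).trans hqp₀)
    refine ⟨⟨p₀, hp₀⟩, ?_⟩
    have hsub1 : closure {(⟨p₀, hp₀⟩ : {a : Ideal R | a.IsPrimary})} ⊆ S :=
      closure_minimal (Set.singleton_subset_iff.mpr hz0) hSclosed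
    have hsub2 : S ⊆ closure {(⟨p₀, hp₀⟩ : {a : Ideal R | a.IsPrimary})} := by
      intro p hpS
      rw [mem_closure_iff]
      intro U hU hpU
      obtain ⟨U', hU', hUeq⟩ := isOpen_induced_iff.mp hU
      obtain ⟨s, hsp, hsprop⟩ := basic_open_structure hU'
        (show (p : Ideal R) ∈ U' from by rw [← hUeq] at hpU; exact hpU)
      refine ⟨⟨p₀, hp₀⟩, ?_, Set.mem_singleton _⟩
      rw [← hUeq]
      exact hsprop p₀ (fun a ha hle => hsp a ha (hle.trans (hcov₀ p.1 p.2 (hqle p hpS))))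
    exact subset_antisymm hsub1 hsub2

end Topology

end PrmSoberAux

/-- For a Noetherian ring `R`, the space of primary ideals with the coarse lower
topology is sober iff `R` is isomorphic to a finite product of rings each of which
is either zero-dimensional or a one-dimensional integral domain. -/
theorem prm_sober_iff_product {R : Type u} [CommRing R] [IsNoetherianRing R] :
    letI := coarseLowerTopology R
    (QuasiSober {a : Ideal R | a.IsPrimary} ↔
      ∃ (n : ℕ) (Rs : Fin n → Type u) (_ : ∀ i, CommRing (Rs i)),
        (∀ i, (∀ p : Ideal (Rs i), p.IsPrime → p.IsMaximal) ∨
          (IsDomain (Rs i) ∧ ringKrullDim (Rs i) = 1)) ∧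
        Nonempty (R ≃+* ((i : Fin n) → Rs i))) := by
  letI := coarseLowerTopology R
  show QuasiSober {a : Ideal R | a.IsPrimary} ↔ _
  refine (PrmSoberAux.quasiSober_iff_PP R).trans ?_
  constructor
  · intro hPP
    exact PrmSoberAux.RHS_of_PP ((minimalPrimes R).ncard) R (Nat.le_succ _) hPP
  · intro h
    exact PrmSoberAux.PP_of_RHS h
end
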